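/- arXiv:2401.00838 — 8 statements merged into one kernel-verified Lean document; each statement's English description precedes it below -/
import Mathlib

section
/- For all V, V₁, V₂ ∈ 𝔳, one has ⟨[V, V₁], [V, V₂]⟩ = ‖V‖²·⟨P_V(V₁), P_V(V₂)⟩. -/
/-!
Write `T z = J_z V`. The norm condition makes `T` a similarity with ratio `‖V‖`, so
`⟪T z, T z'⟫ = ‖V‖² ⟪z, z'⟫`, and the defining identity of the bracket says that `[V, ·]` is the
adjoint of `T`. The adjoint kills `(range T)ᗮ`, so `[V, W] = [V, P_V W]`, and on
`range T` it inverts `T` up to the factor `‖V‖²`: writing `P_V Wᵢ = T zᵢ`, both sides equal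
`‖V‖⁴ ⟪z₁, z₂⟫`.
-/

open RealInnerProductSpace

section Similarity

variable {E F : Type*} [NormedAddCommGroup E] [InnerProductSpace ℝ E]
  [NormedAddCommGroup F] [InnerProductSpace ℝ F]

theorem LinearMap.inner_map_map_of_norm_map_eq_mul (T : E →ₗ[ℝ] F) {c : ℝ}
    (hT : ∀ z, ‖T z‖ = ‖z‖ * c) (z z' : E) : ⟪T z, T z'⟫ = c ^ 2 * ⟪z, z'⟫ := by
  simp only [real_inner_eq_norm_add_mul_self_sub_norm_mul_self_sub_norm_mul_self_div_two,
    ← map_add, hT]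
  ring

variable (T : E →ₗ[ℝ] F) (B : F → E) (hB : ∀ w z, ⟪B w, z⟫ = ⟪T z, w⟫)
include hB

theorem apply_starProjection_range_of_inner_eq [(LinearMap.range T).HasOrthogonalProjection]
    (w : F) : B ((LinearMap.range T).starProjection w) = B w :=
  ext_inner_right ℝ fun z => by
    rw [hB, hB, ← Submodule.inner_starProjection_left_eq_right,
      Submodule.starProjection_eq_self_iff.mpr (LinearMap.mem_range_self T z)]

theorem apply_map_of_inner_eq {c : ℝ} (hT : ∀ z, ‖T z‖ = ‖z‖ * c) (z : E) :
    B (T z) = c ^ 2 • z :=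
  ext_inner_right ℝ fun z' => by
    rw [hB, T.inner_map_map_of_norm_map_eq_mul hT, real_inner_smul_left, real_inner_comm]

theorem inner_apply_apply_of_inner_eq [(LinearMap.range T).HasOrthogonalProjection] {c : ℝ}
    (hT : ∀ z, ‖T z‖ = ‖z‖ * c) (w₁ w₂ : F) :
    ⟪B w₁, B w₂⟫ =
      c ^ 2 * ⟪(LinearMap.range T).starProjection w₁, (LinearMap.range T).starProjection w₂⟫ := by
  obtain ⟨z₁, hz₁⟩ : (LinearMap.range T).starProjection w₁ ∈ LinearMap.range T :=
    Submodule.starProjection_apply_mem _ _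
  obtain ⟨z₂, hz₂⟩ : (LinearMap.range T).starProjection w₂ ∈ LinearMap.range T :=
    Submodule.starProjection_apply_mem _ _
  rw [← apply_starProjection_range_of_inner_eq T B hB w₁,
    ← apply_starProjection_range_of_inner_eq T B hB w₂, ← hz₁, ← hz₂,
    apply_map_of_inner_eq T B hB hT, apply_map_of_inner_eq T B hB hT,
    T.inner_map_map_of_norm_map_eq_mul hT, real_inner_smul_left, real_inner_smul_right]

end Similarity

theorem stmt_1_general
    {𝕍 𝕫 : Type*} [NormedAddCommGroup 𝕍] [InnerProductSpace ℝ 𝕍]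
    [NormedAddCommGroup 𝕫] [InnerProductSpace ℝ 𝕫] [FiniteDimensional ℝ 𝕫]
    (J : 𝕫 →ₗ[ℝ] 𝕍 →ₗ[ℝ] 𝕍)
    (hJnorm : ∀ (z : 𝕫) (v : 𝕍), ‖J z v‖ = ‖z‖ * ‖v‖)
    (br : 𝕍 →ₗ[ℝ] 𝕍 →ₗ[ℝ] 𝕫)
    (hbr : ∀ (U V : 𝕍) (Z : 𝕫), ⟪br U V, Z⟫ = ⟪J Z U, V⟫)
    (V V₁ V₂ : 𝕍) :
    ⟪br V V₁, br V V₂⟫ =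
      ‖V‖ ^ 2 * ⟪(Submodule.orthogonalProjectionOnto (LinearMap.range (J.flip V)) V₁ : 𝕍),
                 (Submodule.orthogonalProjectionOnto (LinearMap.range (J.flip V)) V₂ : 𝕍)⟫ := by
  simp only [← Submodule.starProjection_apply]
  exact inner_apply_apply_of_inner_eq (J.flip V) (br V) (hbr V) (fun z => hJnorm z V) V₁ V₂

/-- For all `V, V₁, V₂ ∈ 𝔳`, one has `⟨[V,V₁],[V,V₂]⟩ = ‖V‖² ⟨P_V V₁, P_V V₂⟩`, where
`P_V` is the orthogonal projection of `𝔳` onto the subspace `J_𝔷V = {J_z V : z ∈ 𝔷}`. -/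
theorem stmt_1
    {𝕍 𝕫 : Type*} [NormedAddCommGroup 𝕍] [InnerProductSpace ℝ 𝕍] [FiniteDimensional ℝ 𝕍]
    [NormedAddCommGroup 𝕫] [InnerProductSpace ℝ 𝕫] [FiniteDimensional ℝ 𝕫]
    (J : 𝕫 →ₗ[ℝ] 𝕍 →ₗ[ℝ] 𝕍)
    (hJsq : ∀ (z : 𝕫) (v : 𝕍), J z (J z v) = -(‖z‖ ^ 2) • v)
    (hJnorm : ∀ (z : 𝕫) (v : 𝕍), ‖J z v‖ = ‖z‖ * ‖v‖)
    (br : 𝕍 →ₗ[ℝ] 𝕍 →ₗ[ℝ] 𝕫)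
    (hbr : ∀ (U V : 𝕍) (Z : 𝕫), ⟪br U V, Z⟫ = ⟪J Z U, V⟫)
    (V V₁ V₂ : 𝕍) :
    ⟪br V V₁, br V V₂⟫ =
      ‖V‖ ^ 2 * ⟪(Submodule.orthogonalProjectionOnto (LinearMap.range (J.flip V)) V₁ : 𝕍),
                 (Submodule.orthogonalProjectionOnto (LinearMap.range (J.flip V)) V₂ : 𝕍)⟫ :=
  stmt_1_general J hJnorm br hbr V V₁ V₂
end

section
/- For all V, V₁ ∈ 𝔳, one has J_{[V,V₁]}(V) = ‖V‖²·P_V(V₁). -/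
open RealInnerProductSpace

/-!
Fix `V` and put `f z = J_z V`. Polarizing `‖f z‖ = ‖V‖ ‖z‖` gives `⟪f z, f w⟫ = ‖V‖² ⟪z, w⟫`,
and the defining identity of the bracket says that `[V, ·]` is the adjoint of `f`. Hence `[V, ·]`
kills `(range f)ᗮ = (J_𝔷V)ᗮ` and satisfies `[V, f z] = ‖V‖² z`; writing `P_V V₁ = f z` gives
`J_{[V,V₁]} V = f [V, f z] = ‖V‖² f z`.
-/

section ScaledIsometry

variable {E F : Type*} [NormedAddCommGroup E] [InnerProductSpace ℝ E]
  [NormedAddCommGroup F] [InnerProductSpace ℝ F]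
  {f : E →ₗ[ℝ] F} {c : ℝ}

theorem inner_map_map_of_norm_map_eq_mul (hf : ∀ x, ‖f x‖ = c * ‖x‖) (x y : E) :
    ⟪f x, f y⟫ = c ^ 2 * ⟪x, y⟫ := by
  have hsum := hf (x + y)
  rw [map_add] at hsum
  have hsq : ‖f x + f y‖ ^ 2 = c ^ 2 * ‖x + y‖ ^ 2 := by rw [hsum, mul_pow]
  rw [norm_add_sq_real, norm_add_sq_real, hf, hf, mul_pow, mul_pow] at hsq
  linarith

variable {g : F →ₗ[ℝ] E} (hg : ∀ u z, ⟪g u, z⟫ = ⟪f z, u⟫)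
include hg

theorem apply_map_of_norm_map_eq_mul (hf : ∀ x, ‖f x‖ = c * ‖x‖) (z : E) :
    g (f z) = c ^ 2 • z :=
  ext_inner_right ℝ fun w => by
    rw [hg, inner_map_map_of_norm_map_eq_mul hf, real_inner_smul_left, real_inner_comm]

theorem apply_eq_zero_of_mem_orthogonal_range {u : F} (hu : u ∈ (LinearMap.range f)ᗮ) :
    g u = 0 :=
  ext_inner_right ℝ fun z => by
    rw [hg, inner_zero_left]
    exact (Submodule.mem_orthogonal _ u).mp hu (f z) ⟨z, rfl⟩

theorem map_apply_eq_smul_starProjection [(LinearMap.range f).HasOrthogonalProjection]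
    (hf : ∀ x, ‖f x‖ = c * ‖x‖) (u : F) :
    f (g u) = c ^ 2 • (LinearMap.range f).starProjection u := by
  obtain ⟨z, hz⟩ := (LinearMap.range f).starProjection_apply_mem u
  have hperp := apply_eq_zero_of_mem_orthogonal_range hg
    ((LinearMap.range f).sub_starProjection_mem_orthogonal u)
  rw [map_sub, sub_eq_zero, ← hz, apply_map_of_norm_map_eq_mul hg hf] at hperp
  rw [hperp, map_smul, hz]

end ScaledIsometry

theorem stmt_2_general
    {𝕍 𝕫 : Type*} [NormedAddCommGroup 𝕍] [InnerProductSpace ℝ 𝕍] [FiniteDimensional ℝ 𝕍]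
    [NormedAddCommGroup 𝕫] [InnerProductSpace ℝ 𝕫]
    (J : 𝕫 →ₗ[ℝ] 𝕍 →ₗ[ℝ] 𝕍)
    (hJnorm : ∀ (z : 𝕫) (v : 𝕍), ‖J z v‖ = ‖z‖ * ‖v‖)
    (br : 𝕍 →ₗ[ℝ] 𝕍 →ₗ[ℝ] 𝕫)
    (hbr : ∀ (U V : 𝕍) (Z : 𝕫), ⟪br U V, Z⟫ = ⟪J Z U, V⟫)
    (V V₁ : 𝕍) :
    J (br V V₁) V =
      ‖V‖ ^ 2 • ((LinearMap.range (J.flip V)).orthogonalProjection V₁ : 𝕍) :=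
  map_apply_eq_smul_starProjection (f := J.flip V) (g := br V) (hbr V)
    (fun z => (hJnorm z V).trans (mul_comm _ _)) V₁

/-- For all `V, V₁ ∈ 𝔳`, one has `J_{[V,V₁]} V = ‖V‖² • P_V V₁`, where `P_V` is the
orthogonal projection of `𝔳` onto the subspace `J_𝔷V = {J_z V : z ∈ 𝔷}`. -/
theorem stmt_2
    {𝕍 𝕫 : Type*} [NormedAddCommGroup 𝕍] [InnerProductSpace ℝ 𝕍] [FiniteDimensional ℝ 𝕍]
    [NormedAddCommGroup 𝕫] [InnerProductSpace ℝ 𝕫] [FiniteDimensional ℝ 𝕫]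
    (J : 𝕫 →ₗ[ℝ] 𝕍 →ₗ[ℝ] 𝕍)
    (hJsq : ∀ (z : 𝕫) (v : 𝕍), J z (J z v) = -(‖z‖ ^ 2) • v)
    (hJnorm : ∀ (z : 𝕫) (v : 𝕍), ‖J z v‖ = ‖z‖ * ‖v‖)
    (br : 𝕍 →ₗ[ℝ] 𝕍 →ₗ[ℝ] 𝕫)
    (hbr : ∀ (U V : 𝕍) (Z : 𝕫), ⟪br U V, Z⟫ = ⟪J Z U, V⟫)
    (V V₁ : 𝕍) :
    J (br V V₁) V =
      ‖V‖ ^ 2 • ((LinearMap.range (J.flip V)).orthogonalProjection V₁ : 𝕍) :=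
  stmt_2_general J hJnorm br hbr V V₁
end

section
/- If (E₁, …, E_n) is an orthonormal basis of 𝔳 and m = dim 𝔷, then for all V, W ∈ 𝔳 one has Σ_{i=1}^n ⟨[E_i, V], [E_i, W]⟩ = m·⟨V, W⟩. -/
/-!
Expanding `[E_i, V]` and `[E_i, W]` in an orthonormal basis `(F_k)` of `𝔷` turns the sum into
`∑_k ∑_i ⟨J_{F_k} E_i, V⟩ ⟨J_{F_k} E_i, W⟩`. Since `‖F_k‖ = 1`, each `J_{F_k}` is a linear isometry
of the finite-dimensional space `𝔳`, so `(J_{F_k} E_i)_i` is again an orthonormal basis and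
Parseval's identity makes each inner sum equal to `⟨V, W⟩`; there are `m` values of `k`.
-/

open RealInnerProductSpace

theorem OrthonormalBasis.sum_inner_isometry_mul_inner {ι 𝕍 : Type*} [Fintype ι]
    [NormedAddCommGroup 𝕍] [InnerProductSpace ℝ 𝕍] [FiniteDimensional ℝ 𝕍]
    (E : OrthonormalBasis ι ℝ 𝕍) (f : 𝕍 →ₗᵢ[ℝ] 𝕍) (v w : 𝕍) :
    ∑ i, ⟪f (E i), v⟫ * ⟪f (E i), w⟫ = ⟪v, w⟫ := by
  rw [← (E.map (f.toLinearIsometryEquiv rfl)).sum_inner_mul_inner v w]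
  refine Finset.sum_congr rfl fun i _ => ?_
  rw [OrthonormalBasis.map_apply, LinearIsometry.toLinearIsometryEquiv_apply,
    real_inner_comm v]

section HeisenbergType

variable {𝕍 𝕫 : Type*} [NormedAddCommGroup 𝕍] [InnerProductSpace ℝ 𝕍]
  [NormedAddCommGroup 𝕫] [InnerProductSpace ℝ 𝕫] (J : 𝕫 →ₗ[ℝ] 𝕍 →ₗ[ℝ] 𝕍)

def unitIsometry (hJnorm : ∀ (z : 𝕫) (v : 𝕍), ‖J z v‖ = ‖z‖ * ‖v‖) {z : 𝕫} (hz : ‖z‖ = 1) :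
    𝕍 →ₗᵢ[ℝ] 𝕍 :=
  ⟨J z, fun v => by rw [hJnorm, hz, one_mul]⟩

theorem inner_bracket_eq_sum_inner_mul_inner {κ : Type*} [Fintype κ] (br : 𝕍 →ₗ[ℝ] 𝕍 →ₗ[ℝ] 𝕫)
    (hbr : ∀ (U V : 𝕍) (Z : 𝕫), ⟪br U V, Z⟫ = ⟪J Z U, V⟫)
    (F : OrthonormalBasis κ ℝ 𝕫) (U V W : 𝕍) :
    ⟪br U V, br U W⟫ = ∑ k, ⟪J (F k) U, V⟫ * ⟪J (F k) U, W⟫ := by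
  rw [← F.sum_inner_mul_inner]
  refine Finset.sum_congr rfl fun k _ => ?_
  rw [real_inner_comm (br U W), hbr, hbr]

end HeisenbergType

theorem stmt_3_general
    {𝕍 𝕫 : Type*} [NormedAddCommGroup 𝕍] [InnerProductSpace ℝ 𝕍] [FiniteDimensional ℝ 𝕍]
    [NormedAddCommGroup 𝕫] [InnerProductSpace ℝ 𝕫] [FiniteDimensional ℝ 𝕫]
    (J : 𝕫 →ₗ[ℝ] 𝕍 →ₗ[ℝ] 𝕍)
    (hJnorm : ∀ (z : 𝕫) (v : 𝕍), ‖J z v‖ = ‖z‖ * ‖v‖)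
    (br : 𝕍 →ₗ[ℝ] 𝕍 →ₗ[ℝ] 𝕫)
    (hbr : ∀ (U V : 𝕍) (Z : 𝕫), ⟪br U V, Z⟫ = ⟪J Z U, V⟫)
    (n : ℕ) (E : OrthonormalBasis (Fin n) ℝ 𝕍)
    (m : ℕ) (hm : m = Module.finrank ℝ 𝕫)
    (V W : 𝕍) :
    ∑ i : Fin n, ⟪br (E i) V, br (E i) W⟫ = (m : ℝ) * ⟪V, W⟫ := by
  set F := stdOrthonormalBasis ℝ 𝕫
  calc ∑ i, ⟪br (E i) V, br (E i) W⟫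
      = ∑ i, ∑ k, ⟪J (F k) (E i), V⟫ * ⟪J (F k) (E i), W⟫ :=
        Finset.sum_congr rfl fun i _ =>
          inner_bracket_eq_sum_inner_mul_inner J br hbr F (E i) V W
    _ = ∑ k, ∑ i, ⟪J (F k) (E i), V⟫ * ⟪J (F k) (E i), W⟫ := Finset.sum_comm
    _ = ∑ _k, ⟪V, W⟫ := Finset.sum_congr rfl fun k _ =>
        E.sum_inner_isometry_mul_inner (unitIsometry J hJnorm (F.orthonormal.1 k)) V W
    _ = (m : ℝ) * ⟪V, W⟫ := by simp [hm]

/-- If `(E₁, …, E_n)` is an orthonormal basis of `𝔳` and `m = dim 𝔷`, then for all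
`V, W ∈ 𝔳` one has `∑ i, ⟨[E i, V], [E i, W]⟩ = m ⟨V, W⟩`. -/
theorem stmt_3
    {𝕍 𝕫 : Type*} [NormedAddCommGroup 𝕍] [InnerProductSpace ℝ 𝕍] [FiniteDimensional ℝ 𝕍]
    [NormedAddCommGroup 𝕫] [InnerProductSpace ℝ 𝕫] [FiniteDimensional ℝ 𝕫]
    (J : 𝕫 →ₗ[ℝ] 𝕍 →ₗ[ℝ] 𝕍)
    (hJsq : ∀ (z : 𝕫) (v : 𝕍), J z (J z v) = -(‖z‖ ^ 2) • v)
    (hJnorm : ∀ (z : 𝕫) (v : 𝕍), ‖J z v‖ = ‖z‖ * ‖v‖)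
    (br : 𝕍 →ₗ[ℝ] 𝕍 →ₗ[ℝ] 𝕫)
    (hbr : ∀ (U V : 𝕍) (Z : 𝕫), ⟪br U V, Z⟫ = ⟪J Z U, V⟫)
    (n : ℕ) (E : OrthonormalBasis (Fin n) ℝ 𝕍)
    (m : ℕ) (hm : m = Module.finrank ℝ 𝕫)
    (V W : 𝕍) :
    ∑ i : Fin n, ⟪br (E i) V, br (E i) W⟫ = (m : ℝ) * ⟪V, W⟫ :=
  stmt_3_general J hJnorm br hbr n E m hm V W
end

section
/- If there exists a nonzero vector v ∈ 𝔳 satisfying the J²-condition, then dim 𝔷 ∈ {0, 1, 3, 7}; moreover, the subspace ℝv + J_𝔷v of 𝔳 has dimension dim 𝔷 + 1 and contains no subspace invariant under all the operators J_z (z ∈ 𝔷) other than {0} and itself (i.e. it is a nontrivial irreducible Clifford module). -/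
/-!
Rescale `v` to a unit vector. The `J²`-condition says exactly that `ℝv + J_𝔷v` is stable under
every `J_z`, and then `x · y := ⟪v, x⟫ y + J_{[v, x]} y` makes it a composition algebra with unit
`v`: for `x = s v + J_z v` one has `x · y = s y + J_z y`, whose norm is `‖x‖ ‖y‖` because
`J_z² = -‖z‖²`. Hurwitz's theorem then gives `dim 𝔷 + 1 ∈ {1, 2, 4, 8}`.

Hurwitz's theorem is proved by Cayley–Dickson doubling. If `B` is a unital subalgebra and `c ≠ 0`
is orthogonal to `B`, then `B ⊕ Bc` is a unital subalgebra of twice the dimension, and `B` is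
associative; so if some nonzero vector is orthogonal to `B ⊕ Bc`, then `B` is even commutative.
Doubling `ℝe` three times inside the algebra produces copies of `ℂ`, `ℍ`, `𝕆`, and since `ℍ` is
not commutative, nothing nonzero is orthogonal to `𝕆`.
-/

open RealInnerProductSpace Module

section CompositionIdentities

variable {A : Type*} [NormedAddCommGroup A] [InnerProductSpace ℝ A] {mul : A →ₗ[ℝ] A →ₗ[ℝ] A}

theorem inner_mul_mul_same_left (hmul : ∀ x y, ‖mul x y‖ = ‖x‖ * ‖y‖) (x y z : A) :
    ⟪mul x y, mul x z⟫ = ⟪x, x⟫ * ⟪y, z⟫ := by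
  have hsq (y : A) : ⟪mul x y, mul x y⟫ = ⟪x, x⟫ * ⟪y, y⟫ := by
    simp only [real_inner_self_eq_norm_mul_norm, hmul]; ring
  have h := hsq (y + z)
  simp only [map_add, inner_add_left, inner_add_right] at h
  linear_combination (h - hsq y - hsq z) / 2 - real_inner_comm (mul x y) (mul x z) / 2
    - ⟪x, x⟫ / 2 * real_inner_comm z y

theorem inner_mul_mul_add_inner_mul_mul (hmul : ∀ x y, ‖mul x y‖ = ‖x‖ * ‖y‖) (x u y z : A) :
    ⟪mul x y, mul u z⟫ + ⟪mul u y, mul x z⟫ = 2 * ⟪x, u⟫ * ⟪y, z⟫ := by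
  have h := inner_mul_mul_same_left hmul (x + u) y z
  simp only [map_add, LinearMap.add_apply, inner_add_left, inner_add_right] at h
  linear_combination h - inner_mul_mul_same_left hmul x y z - inner_mul_mul_same_left hmul u y z
    - ⟪y, z⟫ * real_inner_comm u x

theorem inner_mul_mul_same_right (hmul : ∀ x y, ‖mul x y‖ = ‖x‖ * ‖y‖) (x y z : A) :
    ⟪mul x y, mul z y⟫ = ⟪x, z⟫ * ⟪y, y⟫ := by
  linear_combination inner_mul_mul_add_inner_mul_mul hmul x z y y / 2
    + real_inner_comm (mul z y) (mul x y) / 2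

variable {e : A}

theorem inner_mul_left_eq (hmul : ∀ x y, ‖mul x y‖ = ‖x‖ * ‖y‖) (he1 : ∀ x, mul e x = x)
    (x y z : A) : ⟪mul x y, z⟫ = 2 * ⟪x, e⟫ * ⟪y, z⟫ - ⟪y, mul x z⟫ := by
  have h := inner_mul_mul_add_inner_mul_mul hmul x e y z
  rw [he1, he1] at h
  linear_combination h

theorem inner_mul_right_eq (hmul : ∀ x y, ‖mul x y‖ = ‖x‖ * ‖y‖) (he2 : ∀ x, mul x e = x)
    (x y z : A) : ⟪mul x y, z⟫ = 2 * ⟪y, e⟫ * ⟪x, z⟫ - ⟪mul z y, x⟫ := by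
  have h := inner_mul_mul_add_inner_mul_mul hmul x z y e
  rw [he2, he2] at h
  linear_combination h

theorem mul_mul_self_left (hmul : ∀ x y, ‖mul x y‖ = ‖x‖ * ‖y‖) (he1 : ∀ x, mul e x = x)
    (x y : A) : mul x (mul x y) = (2 * ⟪x, e⟫) • mul x y - ⟪x, x⟫ • y := by
  refine ext_inner_right ℝ fun z ↦ ?_
  rw [inner_sub_left, real_inner_smul_left, real_inner_smul_left,
    inner_mul_left_eq hmul he1 x (mul x y) z, inner_mul_mul_same_left hmul x y z]

theorem mul_mul_self_right (hmul : ∀ x y, ‖mul x y‖ = ‖x‖ * ‖y‖) (he2 : ∀ x, mul x e = x)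
    (x y : A) : mul (mul y x) x = (2 * ⟪x, e⟫) • mul y x - ⟪x, x⟫ • y := by
  refine ext_inner_right ℝ fun z ↦ ?_
  rw [inner_sub_left, real_inner_smul_left, real_inner_smul_left,
    inner_mul_right_eq hmul he2 (mul y x) x z, inner_mul_mul_same_right hmul z x y,
    real_inner_comm z y]
  ring

theorem mul_mul_add_mul_mul_left (hmul : ∀ x y, ‖mul x y‖ = ‖x‖ * ‖y‖)
    (he1 : ∀ x, mul e x = x) (x u y : A) :
    mul x (mul u y) + mul u (mul x y) =
      (2 * ⟪x, e⟫) • mul u y + (2 * ⟪u, e⟫) • mul x y - (2 * ⟪x, u⟫) • y := by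
  have h := mul_mul_self_left hmul he1 (x + u) y
  simp only [map_add, LinearMap.add_apply, inner_add_left, inner_add_right] at h
  have hux : ⟪u, x⟫ • y = ⟪x, u⟫ • y := by rw [real_inner_comm]
  linear_combination (norm := module) h - mul_mul_self_left hmul he1 x y
    - mul_mul_self_left hmul he1 u y - hux

theorem mul_mul_add_mul_mul_right (hmul : ∀ x y, ‖mul x y‖ = ‖x‖ * ‖y‖)
    (he2 : ∀ x, mul x e = x) (x u y : A) :
    mul (mul y x) u + mul (mul y u) x =
      (2 * ⟪x, e⟫) • mul y u + (2 * ⟪u, e⟫) • mul y x - (2 * ⟪x, u⟫) • y := by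
  have h := mul_mul_self_right hmul he2 (x + u) y
  simp only [map_add, LinearMap.add_apply, inner_add_left, inner_add_right] at h
  have hux : ⟪u, x⟫ • y = ⟪x, u⟫ • y := by rw [real_inner_comm]
  linear_combination (norm := module) h - mul_mul_self_right hmul he2 x y
    - mul_mul_self_right hmul he2 u y - hux

theorem mul_comm_eq (hmul : ∀ x y, ‖mul x y‖ = ‖x‖ * ‖y‖) (he1 : ∀ x, mul e x = x)
    (he2 : ∀ x, mul x e = x) (x u : A) :
    mul u x = (2 * ⟪u, e⟫) • x + (2 * ⟪x, e⟫) • u - (2 * ⟪x, u⟫) • e - mul x u := by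
  have h := mul_mul_add_mul_mul_left hmul he1 x u e
  rw [he2, he2] at h
  linear_combination (norm := module) h

theorem mul_ne_mul_of_inner_eq_zero (hmul : ∀ x y, ‖mul x y‖ = ‖x‖ * ‖y‖)
    (he1 : ∀ x, mul e x = x) (he2 : ∀ x, mul x e = x) {i j : A} (hi0 : i ≠ 0) (hj0 : j ≠ 0)
    (hie : ⟪i, e⟫ = 0) (hje : ⟪j, e⟫ = 0) (hij : ⟪i, j⟫ = 0) : mul i j ≠ mul j i := by
  intro hcomm
  rw [mul_comm_eq hmul he1 he2 i j, hie, hje, hij] at hcomm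
  have h2 : (2 : ℝ) • mul i j = 0 := by linear_combination (norm := module) hcomm
  have h0 : ‖mul i j‖ = 0 := by simp [by simpa using h2]
  simp [hmul, hi0, hj0] at h0

theorem mul_mul_right_eq_of_inner_eq_zero (hmul : ∀ x y, ‖mul x y‖ = ‖x‖ * ‖y‖)
    (he1 : ∀ x, mul e x = x) (he2 : ∀ x, mul x e = x) {x u a : A}
    (hae : ⟪a, e⟫ = 0) (hax : ⟪a, x⟫ = 0) (hau : ⟪a, u⟫ = 0) (haux : ⟪a, mul u x⟫ = 0) :
    mul x (mul u a) = mul (mul u x) a := by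
  have hxa : mul x a = (2 * ⟪x, e⟫) • a - mul a x := by
    have h := mul_comm_eq hmul he1 he2 a x
    rw [hae, hax] at h
    simpa using h
  have hcax : mul u (mul a x) = (2 * ⟪u, e⟫) • mul a x - mul a (mul u x) := by
    have h := mul_mul_add_mul_mul_left hmul he1 u a x
    rw [real_inner_comm a u, hau, hae] at h
    linear_combination (norm := module) h
  have huxe : ⟪mul u x, e⟫ = 2 * ⟪x, e⟫ * ⟪u, e⟫ - ⟪x, u⟫ := by
    rw [inner_mul_right_eq hmul he2 u x e, he1]
  have hd := mul_mul_add_mul_mul_left hmul he1 x u a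
  rw [hxa, map_sub, map_smul, hcax] at hd
  have hw := mul_comm_eq hmul he1 he2 a (mul u x)
  rw [hae, haux, huxe] at hw
  linear_combination (norm := module) hd - hw

theorem inner_mul_eq_zero_of_mem_orthogonal (hmul : ∀ x y, ‖mul x y‖ = ‖x‖ * ‖y‖)
    (he1 : ∀ x, mul e x = x) {B : Submodule ℝ A} (hB : ∀ x ∈ B, ∀ y ∈ B, mul x y ∈ B)
    {c x y : A} (hc : c ∈ Bᗮ) (hx : x ∈ B) (hy : y ∈ B) : ⟪mul x c, y⟫ = 0 := by
  rw [inner_mul_left_eq hmul he1, Submodule.inner_left_of_mem_orthogonal hy hc,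
    Submodule.inner_left_of_mem_orthogonal (hB x hx y hy) hc]
  ring

end CompositionIdentities

structure IsUnitalSubalgebra {A : Type*} [AddCommGroup A] [Module ℝ A]
    (mul : A →ₗ[ℝ] A →ₗ[ℝ] A) (e : A) (B : Submodule ℝ A) : Prop where
  one_mem : e ∈ B
  mul_mem : ∀ x ∈ B, ∀ y ∈ B, mul x y ∈ B

def cayleyDickson {A : Type*} [AddCommGroup A] [Module ℝ A]
    (mul : A →ₗ[ℝ] A →ₗ[ℝ] A) (B : Submodule ℝ A) (c : A) : Submodule ℝ A :=
  B ⊔ B.map (mul.flip c)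

section CayleyDickson

variable {A : Type*} [NormedAddCommGroup A] [InnerProductSpace ℝ A]
  {mul : A →ₗ[ℝ] A →ₗ[ℝ] A} {e : A} {B : Submodule ℝ A} {c : A}

theorem mul_flip_injective (hmul : ∀ x y, ‖mul x y‖ = ‖x‖ * ‖y‖) (hc0 : c ≠ 0) :
    Function.Injective (mul.flip c) := by
  refine (injective_iff_map_eq_zero _).mpr fun x hx ↦ ?_
  have : ‖x‖ * ‖c‖ = 0 := by rw [← hmul, ← LinearMap.flip_apply, hx, norm_zero]
  simpa [hc0] using this

theorem finrank_cayleyDickson [FiniteDimensional ℝ A] (hmul : ∀ x y, ‖mul x y‖ = ‖x‖ * ‖y‖)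
    (he1 : ∀ x, mul e x = x) (hB : ∀ x ∈ B, ∀ y ∈ B, mul x y ∈ B) (hc : c ∈ Bᗮ)
    (hc0 : c ≠ 0) : finrank ℝ (cayleyDickson mul B c) = 2 * finrank ℝ B := by
  have hdisj : B ⊓ B.map (mul.flip c) = ⊥ := by
    refine (Submodule.eq_bot_iff _).mpr fun w hw ↦ ?_
    obtain ⟨hwB, x, hx, rfl⟩ := hw
    exact inner_self_eq_zero.mp (inner_mul_eq_zero_of_mem_orthogonal hmul he1 hB hc hx hwB)
  have h := Submodule.finrank_sup_add_finrank_inf_eq B (B.map (mul.flip c))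
  rw [hdisj, finrank_bot,
    ← (Submodule.equivMapOfInjective _ (mul_flip_injective hmul hc0) B).finrank_eq] at h
  rw [cayleyDickson]
  omega

theorem mul_mul_right_of_mem_orthogonal (hmul : ∀ x y, ‖mul x y‖ = ‖x‖ * ‖y‖)
    (he1 : ∀ x, mul e x = x) (he2 : ∀ x, mul x e = x) (hB : IsUnitalSubalgebra mul e B)
    (hc : c ∈ Bᗮ) {x y : A} (hx : x ∈ B) (hy : y ∈ B) :
    mul x (mul y c) = mul (mul y x) c := by
  have hperp {b : A} (hb : b ∈ B) : ⟪c, b⟫ = 0 := Submodule.inner_left_of_mem_orthogonal hb hc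
  exact mul_mul_right_eq_of_inner_eq_zero hmul he1 he2 (hperp hB.one_mem) (hperp hx) (hperp hy)
    (hperp (hB.mul_mem y hy x hx))

theorem mul_right_mul_of_mem_orthogonal (hmul : ∀ x y, ‖mul x y‖ = ‖x‖ * ‖y‖)
    (he1 : ∀ x, mul e x = x) (he2 : ∀ x, mul x e = x) (hB : IsUnitalSubalgebra mul e B)
    (hc : c ∈ Bᗮ) {x y : A} (hx : x ∈ B) (hy : y ∈ B) :
    mul (mul y c) x = mul ((2 * ⟪x, e⟫) • y - mul y x) c := by
  have hxyc : ⟪x, mul y c⟫ = 0 := by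
    rw [real_inner_comm, inner_mul_eq_zero_of_mem_orthogonal hmul he1 hB.mul_mem hc hy hx]
  have h := mul_comm_eq hmul he1 he2 x (mul y c)
  rw [inner_mul_eq_zero_of_mem_orthogonal hmul he1 hB.mul_mem hc hy hB.one_mem, hxyc,
    mul_mul_right_of_mem_orthogonal hmul he1 he2 hB hc hx hy] at h
  rw [h, map_sub, map_smul, LinearMap.sub_apply, LinearMap.smul_apply]
  module

theorem mul_right_mul_right_of_mem_orthogonal (hmul : ∀ x y, ‖mul x y‖ = ‖x‖ * ‖y‖)
    (he1 : ∀ x, mul e x = x) (he2 : ∀ x, mul x e = x) (hB : IsUnitalSubalgebra mul e B)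
    (hc : c ∈ Bᗮ) {x y : A} (hx : x ∈ B) (hy : y ∈ B) :
    mul (mul x c) (mul y c) = ⟪c, c⟫ • (mul y x - (2 * ⟪y, e⟫) • x) := by
  have hce : ⟪c, e⟫ = 0 := Submodule.inner_left_of_mem_orthogonal hB.one_mem hc
  have h := mul_mul_add_mul_mul_right hmul he2 c (mul y c) x
  rw [mul_mul_right_of_mem_orthogonal hmul he1 he2 hB hc hx hy,
    mul_mul_self_right hmul he2, hce,
    inner_mul_eq_zero_of_mem_orthogonal hmul he1 hB.mul_mem hc hy hB.one_mem] at h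
  have hcyc : ⟪c, mul y c⟫ = ⟪y, e⟫ * ⟪c, c⟫ := by
    rw [real_inner_comm e y, ← inner_mul_mul_same_right hmul, he1]
  rw [hcyc] at h
  linear_combination (norm := module) h

theorem IsUnitalSubalgebra.cayleyDickson_of_mem_orthogonal (hmul : ∀ x y, ‖mul x y‖ = ‖x‖ * ‖y‖)
    (he1 : ∀ x, mul e x = x) (he2 : ∀ x, mul x e = x) (hB : IsUnitalSubalgebra mul e B)
    (hc : c ∈ Bᗮ) : IsUnitalSubalgebra mul e (cayleyDickson mul B c) := by
  refine ⟨Submodule.mem_sup_left hB.one_mem, fun p hp q hq ↦ ?_⟩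
  obtain ⟨x₁, hx₁, _, ⟨y₁, hy₁, rfl⟩, rfl⟩ := Submodule.mem_sup.mp hp
  obtain ⟨x₂, hx₂, _, ⟨y₂, hy₂, rfl⟩, rfl⟩ := Submodule.mem_sup.mp hq
  have hB₀ {b : A} (hb : b ∈ B) : b ∈ cayleyDickson mul B c := Submodule.mem_sup_left hb
  have hB₁ {b : A} (hb : b ∈ B) : mul b c ∈ cayleyDickson mul B c :=
    Submodule.mem_sup_right ⟨b, hb, rfl⟩
  simp only [LinearMap.flip_apply, map_add, LinearMap.add_apply,
    mul_mul_right_of_mem_orthogonal hmul he1 he2 hB hc hx₁ hy₂,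
    mul_right_mul_of_mem_orthogonal hmul he1 he2 hB hc hx₂ hy₁,
    mul_right_mul_right_of_mem_orthogonal hmul he1 he2 hB hc hy₁ hy₂]
  have h2 := hB.mul_mem
  exact add_mem (add_mem (hB₀ (h2 _ hx₁ _ hx₂))
    (hB₁ (sub_mem (B.smul_mem _ hy₁) (h2 _ hy₁ _ hx₂)))) (add_mem (hB₁ (h2 _ hy₂ _ hx₁))
      (hB₀ (B.smul_mem _ (sub_mem (h2 _ hy₂ _ hy₁) (B.smul_mem _ hy₁)))))

theorem IsUnitalSubalgebra.span_singleton (he1 : ∀ x, mul e x = x) :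
    IsUnitalSubalgebra mul e (ℝ ∙ e) := by
  refine ⟨Submodule.mem_span_singleton_self e, fun x hx y hy ↦ ?_⟩
  obtain ⟨s, rfl⟩ := Submodule.mem_span_singleton.mp hx
  obtain ⟨t, rfl⟩ := Submodule.mem_span_singleton.mp hy
  simpa [he1] using (ℝ ∙ e).smul_mem t ((ℝ ∙ e).smul_mem s (Submodule.mem_span_singleton_self e))

theorem mem_cayleyDickson_right (he1 : ∀ x, mul e x = x) (he : e ∈ B) :
    c ∈ cayleyDickson mul B c :=
  Submodule.mem_sup_right ⟨e, he, he1 c⟩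

theorem mul_assoc_of_mem_orthogonal (hmul : ∀ x y, ‖mul x y‖ = ‖x‖ * ‖y‖)
    (he1 : ∀ x, mul e x = x) (he2 : ∀ x, mul x e = x) (hB : IsUnitalSubalgebra mul e B)
    {a : A} (ha : a ∈ Bᗮ) (ha0 : a ≠ 0) {u y x : A} (hu : u ∈ B) (hy : y ∈ B) (hx : x ∈ B) :
    mul (mul u y) x = mul u (mul y x) := by
  have hperp {b : A} (hb : b ∈ B) : ⟪mul u a, b⟫ = 0 :=
    inner_mul_eq_zero_of_mem_orthogonal hmul he1 hB.mul_mem ha hu hb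
  refine mul_flip_injective hmul ha0 ?_
  simp only [LinearMap.flip_apply]
  calc mul (mul (mul u y) x) a = mul x (mul (mul u y) a) :=
        (mul_mul_right_of_mem_orthogonal hmul he1 he2 hB ha hx (hB.mul_mem _ hu _ hy)).symm
    _ = mul x (mul y (mul u a)) := by
        rw [mul_mul_right_of_mem_orthogonal hmul he1 he2 hB ha hy hu]
    _ = mul (mul y x) (mul u a) :=
        mul_mul_right_eq_of_inner_eq_zero hmul he1 he2 (hperp hB.one_mem) (hperp hx) (hperp hy)
          (hperp (hB.mul_mem _ hy _ hx))
    _ = mul (mul u (mul y x)) a :=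
        mul_mul_right_of_mem_orthogonal hmul he1 he2 hB ha (hB.mul_mem _ hy _ hx) hu

theorem mul_comm_of_mem_orthogonal_cayleyDickson (hmul : ∀ x y, ‖mul x y‖ = ‖x‖ * ‖y‖)
    (he1 : ∀ x, mul e x = x) (he2 : ∀ x, mul x e = x) (hB : IsUnitalSubalgebra mul e B)
    (hc : c ∈ Bᗮ) (hc0 : c ≠ 0) {a : A} (ha : a ∈ (cayleyDickson mul B c)ᗮ) (ha0 : a ≠ 0)
    {x y : A} (hx : x ∈ B) (hy : y ∈ B) : mul x y = mul y x := by
  have hD := hB.cayleyDickson_of_mem_orthogonal hmul he1 he2 hc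
  refine mul_flip_injective hmul hc0 ?_
  simp only [LinearMap.flip_apply]
  rw [mul_assoc_of_mem_orthogonal hmul he1 he2 hD ha ha0 (Submodule.mem_sup_left hx)
    (Submodule.mem_sup_left hy) (mem_cayleyDickson_right he1 hB.one_mem),
    mul_mul_right_of_mem_orthogonal hmul he1 he2 hB hc hx hy]

theorem exists_cayleyDickson [FiniteDimensional ℝ A] (hmul : ∀ x y, ‖mul x y‖ = ‖x‖ * ‖y‖)
    (he1 : ∀ x, mul e x = x) (he2 : ∀ x, mul x e = x) (hB : IsUnitalSubalgebra mul e B)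
    (hlt : finrank ℝ B < finrank ℝ A) :
    ∃ c ∈ Bᗮ, c ≠ 0 ∧ IsUnitalSubalgebra mul e (cayleyDickson mul B c) ∧
      finrank ℝ (cayleyDickson mul B c) = 2 * finrank ℝ B := by
  have hB_ne : B ≠ ⊤ := by rintro rfl; exact hlt.ne (finrank_top ℝ A)
  obtain ⟨c, hc, hc0⟩ :=
    (Submodule.ne_bot_iff _).mp (mt Submodule.orthogonal_eq_bot_iff.mp hB_ne)
  exact ⟨c, hc, hc0, hB.cayleyDickson_of_mem_orthogonal hmul he1 he2 hc,
    finrank_cayleyDickson hmul he1 hB.mul_mem hc hc0⟩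

end CayleyDickson

theorem finrank_mem_of_norm_mul_eq {A : Type*} [NormedAddCommGroup A] [InnerProductSpace ℝ A]
    [FiniteDimensional ℝ A] (mul : A →ₗ[ℝ] A →ₗ[ℝ] A) (e : A) (he : ‖e‖ = 1)
    (he1 : ∀ x, mul e x = x) (he2 : ∀ x, mul x e = x)
    (hmul : ∀ x y, ‖mul x y‖ = ‖x‖ * ‖y‖) :
    finrank ℝ A ∈ ({1, 2, 4, 8} : Set ℕ) := by
  have he0 : e ≠ 0 := by rintro rfl; simp at he
  have hR := IsUnitalSubalgebra.span_singleton (mul := mul) he1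
  have hR1 : finrank ℝ (ℝ ∙ e) = 1 := finrank_span_singleton he0
  simp only [Set.mem_insert_iff, Set.mem_singleton_iff]
  rcases le_or_gt (finrank ℝ A) 1 with h1 | h1
  · have := Submodule.finrank_le (ℝ ∙ e); omega
  obtain ⟨i, hi, hi0, hC, hC2⟩ := exists_cayleyDickson hmul he1 he2 hR (by omega)
  set C := cayleyDickson mul (ℝ ∙ e) i
  rcases le_or_gt (finrank ℝ A) 2 with h2 | h2
  · omega
  obtain ⟨j, hj, hj0, hH, hH4⟩ := exists_cayleyDickson hmul he1 he2 hC (by omega)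
  set H := cayleyDickson mul C j
  have := Submodule.finrank_le H
  rcases le_or_gt (finrank ℝ A) 4 with h4 | h4
  · omega
  obtain ⟨l, hl, hl0, hO, hO8⟩ := exists_cayleyDickson hmul he1 he2 hH (by omega)
  have := Submodule.finrank_le (cayleyDickson mul H l)
  rcases le_or_gt (finrank ℝ A) 8 with h8 | h8
  · omega
  obtain ⟨a, ha, ha0, -⟩ := exists_cayleyDickson hmul he1 he2 hO (by omega)
  have hiC : i ∈ C := mem_cayleyDickson_right he1 hR.one_mem
  have hiH : i ∈ H := Submodule.mem_sup_left hiC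
  have hjH : j ∈ H := mem_cayleyDickson_right he1 hC.one_mem
  have hie : ⟪i, e⟫ = 0 := Submodule.inner_left_of_mem_orthogonal
    (Submodule.mem_span_singleton_self e) hi
  have hje : ⟪j, e⟫ = 0 := Submodule.inner_left_of_mem_orthogonal hC.one_mem hj
  have hij : ⟪i, j⟫ = 0 := Submodule.inner_right_of_mem_orthogonal hiC hj
  exact (mul_ne_mul_of_inner_eq_zero hmul he1 he2 hi0 hj0 hie hje hij
    (mul_comm_of_mem_orthogonal_cayleyDickson hmul he1 he2 hH hl hl0 ha ha0 hiH hjH)).elim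

def cliffordSpan {𝕍 𝕫 : Type*} [AddCommGroup 𝕍] [Module ℝ 𝕍] [AddCommGroup 𝕫] [Module ℝ 𝕫]
    (J : 𝕫 →ₗ[ℝ] 𝕍 →ₗ[ℝ] 𝕍) (v : 𝕍) : Submodule ℝ 𝕍 :=
  (ℝ ∙ v) ⊔ LinearMap.range (J.flip v)

section Clifford

variable {𝕍 𝕫 : Type*} [NormedAddCommGroup 𝕍] [InnerProductSpace ℝ 𝕍]
  [NormedAddCommGroup 𝕫] [InnerProductSpace ℝ 𝕫] {J : 𝕫 →ₗ[ℝ] 𝕍 →ₗ[ℝ] 𝕍}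

theorem mem_cliffordSpan {v w : 𝕍} :
    w ∈ cliffordSpan J v ↔ ∃ (s : ℝ) (z : 𝕫), s • v + J z v = w := by
  simp only [cliffordSpan, Submodule.mem_sup, Submodule.mem_span_singleton, LinearMap.mem_range,
    LinearMap.flip_apply]
  constructor
  · rintro ⟨_, ⟨s, rfl⟩, _, ⟨z, rfl⟩, rfl⟩
    exact ⟨s, z, rfl⟩
  · rintro ⟨s, z, rfl⟩
    exact ⟨_, ⟨s, rfl⟩, _, ⟨z, rfl⟩, rfl⟩

theorem inner_J_J_left (hJnorm : ∀ z v, ‖J z v‖ = ‖z‖ * ‖v‖) (z : 𝕫) (u w : 𝕍) :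
    ⟪J z u, J z w⟫ = ‖z‖ ^ 2 * ⟪u, w⟫ := by
  have hsq (x : 𝕍) : ⟪J z x, J z x⟫ = ‖z‖ ^ 2 * ⟪x, x⟫ := by
    simp only [real_inner_self_eq_norm_mul_norm, hJnorm]; ring
  have h := hsq (u + w)
  simp only [map_add, inner_add_left, inner_add_right] at h
  linear_combination (h - hsq u - hsq w) / 2 - real_inner_comm (J z u) (J z w) / 2
    - ‖z‖ ^ 2 / 2 * real_inner_comm w u

theorem inner_J_J_right (hJnorm : ∀ z v, ‖J z v‖ = ‖z‖ * ‖v‖) (z y : 𝕫) (w : 𝕍) :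
    ⟪J z w, J y w⟫ = ⟪z, y⟫ * ‖w‖ ^ 2 := by
  have hsq (x : 𝕫) : ⟪J x w, J x w⟫ = ⟪x, x⟫ * ‖w‖ ^ 2 := by
    simp only [real_inner_self_eq_norm_mul_norm, hJnorm]; ring
  have h := hsq (z + y)
  simp only [map_add, LinearMap.add_apply, inner_add_left, inner_add_right] at h
  linear_combination (h - hsq z - hsq y) / 2 - real_inner_comm (J z w) (J y w) / 2
    - ‖w‖ ^ 2 / 2 * real_inner_comm y z

theorem inner_J_self (hJsq : ∀ z v, J z (J z v) = -(‖z‖ ^ 2) • v)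
    (hJnorm : ∀ z v, ‖J z v‖ = ‖z‖ * ‖v‖) (z : 𝕫) (w : 𝕍) : ⟪J z w, w⟫ = 0 := by
  rcases eq_or_ne z 0 with rfl | hz
  · simp
  have h := inner_J_J_left hJnorm z w (J z w)
  rw [hJsq, inner_smul_right, real_inner_comm (J z w) w] at h
  have hz2 : ‖z‖ ^ 2 ≠ 0 := by positivity
  exact (mul_eq_zero.mp (by linarith : ‖z‖ ^ 2 * ⟪J z w, w⟫ = 0)).resolve_left hz2

theorem norm_smul_add_J_sq (hJsq : ∀ z v, J z (J z v) = -(‖z‖ ^ 2) • v)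
    (hJnorm : ∀ z v, ‖J z v‖ = ‖z‖ * ‖v‖) (s : ℝ) (z : 𝕫) (w : 𝕍) :
    ‖s • w + J z w‖ ^ 2 = (s ^ 2 + ‖z‖ ^ 2) * ‖w‖ ^ 2 := by
  have h := inner_J_self hJsq hJnorm z w
  rw [← real_inner_self_eq_norm_sq]
  simp only [inner_add_left, inner_add_right, real_inner_smul_left, real_inner_smul_right,
    inner_J_J_left hJnorm, real_inner_comm (J z w) w, h, real_inner_self_eq_norm_sq,
    norm_smul, mul_pow, Real.norm_eq_abs, sq_abs]
  ring

theorem finrank_cliffordSpan [FiniteDimensional ℝ 𝕫]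
    (hJsq : ∀ z v, J z (J z v) = -(‖z‖ ^ 2) • v) (hJnorm : ∀ z v, ‖J z v‖ = ‖z‖ * ‖v‖)
    {v : 𝕍} (hv : v ≠ 0) : finrank ℝ (cliffordSpan J v) = finrank ℝ 𝕫 + 1 := by
  have hinj : Function.Injective (J.flip v) := by
    refine (injective_iff_map_eq_zero _).mpr fun z hz ↦ ?_
    have : ‖z‖ * ‖v‖ = 0 := by rw [← hJnorm, ← LinearMap.flip_apply, hz, norm_zero]
    simpa [hv] using this
  have hdisj : (ℝ ∙ v) ⊓ LinearMap.range (J.flip v) = ⊥ := by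
    refine (Submodule.eq_bot_iff _).mpr fun w ⟨hwv, z, hz⟩ ↦ ?_
    obtain ⟨s, rfl⟩ := Submodule.mem_span_singleton.mp hwv
    have h := inner_J_self hJsq hJnorm z v
    rw [← LinearMap.flip_apply (m := z), hz, real_inner_smul_left] at h
    simp_all
  have h := Submodule.finrank_sup_add_finrank_inf_eq (ℝ ∙ v) (LinearMap.range (J.flip v))
  rw [hdisj, finrank_bot, finrank_span_singleton hv, LinearMap.finrank_range_of_inj hinj] at h
  rw [cliffordSpan]
  omega

variable {v : 𝕍}

theorem cliffordSpan_smul {c : ℝ} (hc : c ≠ 0) : cliffordSpan J (c • v) = cliffordSpan J v := by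
  rw [cliffordSpan, cliffordSpan, Submodule.span_singleton_smul_eq hc.isUnit, map_smul,
    LinearMap.range_smul _ _ hc]

theorem J_J_mem_cliffordSpan (hJsq : ∀ z v, J z (J z v) = -(‖z‖ ^ 2) • v)
    (hJ2 : ∀ z₁ z₂ : 𝕫, ⟪z₁, z₂⟫ = 0 → ∃ z₃ : 𝕫, J z₁ (J z₂ v) = J z₃ v) (z y : 𝕫) :
    J z (J y v) ∈ cliffordSpan J v := by
  rcases eq_or_ne z 0 with rfl | hz
  · simp
  set c := ⟪y, z⟫ / ‖z‖ ^ 2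
  have hperp : ⟪z, y - c • z⟫ = 0 := by
    rw [inner_sub_right, real_inner_smul_right, real_inner_self_eq_norm_sq, real_inner_comm,
      div_mul_cancel₀ _ (by positivity), sub_self]
  obtain ⟨z₃, h₃⟩ := hJ2 z (y - c • z) hperp
  have hy : J y v = c • J z v + J (y - c • z) v := by
    rw [map_sub, LinearMap.sub_apply, map_smul, LinearMap.smul_apply]
    module
  rw [hy, map_add, map_smul, hJsq, h₃, smul_smul]
  exact mem_cliffordSpan.mpr ⟨_, _, rfl⟩

theorem J_mem_cliffordSpan (hJsq : ∀ z v, J z (J z v) = -(‖z‖ ^ 2) • v)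
    (hJ2 : ∀ z₁ z₂ : 𝕫, ⟪z₁, z₂⟫ = 0 → ∃ z₃ : 𝕫, J z₁ (J z₂ v) = J z₃ v) (z : 𝕫) {w : 𝕍}
    (hw : w ∈ cliffordSpan J v) : J z w ∈ cliffordSpan J v := by
  obtain ⟨s, y, rfl⟩ := mem_cliffordSpan.mp hw
  rw [map_add, map_smul]
  exact add_mem (Submodule.smul_mem _ s (mem_cliffordSpan.mpr ⟨0, z, by simp⟩))
    (J_J_mem_cliffordSpan hJsq hJ2 z y)

theorem mem_of_mem_cliffordSpan (hJsq : ∀ z v, J z (J z v) = -(‖z‖ ^ 2) • v)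
    {W : Submodule ℝ 𝕍} (hW : ∀ z, W.map (J z) ≤ W) {w : 𝕍} (hwW : w ∈ W)
    (hw : w ∈ cliffordSpan J v) (hw0 : w ≠ 0) : v ∈ W := by
  obtain ⟨s, u, rfl⟩ := mem_cliffordSpan.mp hw
  have hpos : s ^ 2 + ‖u‖ ^ 2 ≠ 0 := by
    intro h0
    have hs : s = 0 := by nlinarith [sq_nonneg s, sq_nonneg ‖u‖]
    have hu : u = 0 := norm_eq_zero.mp (by nlinarith [sq_nonneg s, sq_nonneg ‖u‖])
    simp [hs, hu] at hw0
  have hkey : s • (s • v + J u v) - J u (s • v + J u v) = (s ^ 2 + ‖u‖ ^ 2) • v := by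
    rw [map_add, map_smul, hJsq]
    module
  have hmem : (s ^ 2 + ‖u‖ ^ 2) • v ∈ W :=
    hkey ▸ sub_mem (W.smul_mem s hwW) (hW u ⟨_, hwW, rfl⟩)
  have := W.smul_mem (s ^ 2 + ‖u‖ ^ 2)⁻¹ hmem
  rwa [inv_smul_smul₀ hpos] at this

theorem eq_bot_or_eq_cliffordSpan (hJsq : ∀ z v, J z (J z v) = -(‖z‖ ^ 2) • v)
    {W : Submodule ℝ 𝕍} (hle : W ≤ cliffordSpan J v) (hW : ∀ z, W.map (J z) ≤ W) :
    W = ⊥ ∨ W = cliffordSpan J v := by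
  refine or_iff_not_imp_left.mpr fun hne ↦ le_antisymm hle ?_
  obtain ⟨w, hwW, hw0⟩ := (Submodule.ne_bot_iff W).mp hne
  have hv := mem_of_mem_cliffordSpan hJsq hW hwW (hle hwW) hw0
  refine sup_le ((Submodule.span_singleton_le_iff_mem _ _).mpr hv) ?_
  rintro _ ⟨z, rfl⟩
  exact hW z ⟨v, hv, rfl⟩

end Clifford

noncomputable def cliffordMul {𝕍 𝕫 : Type*} [NormedAddCommGroup 𝕍] [InnerProductSpace ℝ 𝕍]
    [AddCommGroup 𝕫] [Module ℝ 𝕫] (J : 𝕫 →ₗ[ℝ] 𝕍 →ₗ[ℝ] 𝕍) (br : 𝕍 →ₗ[ℝ] 𝕍 →ₗ[ℝ] 𝕫) (v : 𝕍) :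
    𝕍 →ₗ[ℝ] 𝕍 →ₗ[ℝ] 𝕍 :=
  (innerₛₗ ℝ v).smulRight LinearMap.id + J ∘ₗ br v

section CliffordMul

variable {𝕍 𝕫 : Type*} [NormedAddCommGroup 𝕍] [InnerProductSpace ℝ 𝕍]
  [NormedAddCommGroup 𝕫] [InnerProductSpace ℝ 𝕫] {J : 𝕫 →ₗ[ℝ] 𝕍 →ₗ[ℝ] 𝕍}
  {br : 𝕍 →ₗ[ℝ] 𝕍 →ₗ[ℝ] 𝕫} {v : 𝕍}

theorem cliffordMul_apply (x y : 𝕍) : cliffordMul J br v x y = ⟪v, x⟫ • y + J (br v x) y :=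
  rfl

theorem cliffordMul_smul_add_J (hJsq : ∀ z v, J z (J z v) = -(‖z‖ ^ 2) • v)
    (hJnorm : ∀ z v, ‖J z v‖ = ‖z‖ * ‖v‖) (hbr : ∀ U V Z, ⟪br U V, Z⟫ = ⟪J Z U, V⟫)
    (hv : ‖v‖ = 1) (s : ℝ) (z : 𝕫) (y : 𝕍) :
    cliffordMul J br v (s • v + J z v) y = s • y + J z y := by
  have hperp (z : 𝕫) : ⟪J z v, v⟫ = 0 := inner_J_self hJsq hJnorm z v
  have hbrz : br v (s • v + J z v) = z := by
    refine ext_inner_right ℝ fun y ↦ ?_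
    rw [hbr, inner_add_right, real_inner_smul_right, hperp, inner_J_J_right hJnorm, hv,
      real_inner_comm]
    ring
  have hvx : ⟪v, s • v + J z v⟫ = s := by
    rw [inner_add_right, real_inner_smul_right, real_inner_self_eq_norm_sq, hv,
      real_inner_comm, hperp]
    ring
  rw [cliffordMul_apply, hvx, hbrz]

theorem finrank_cliffordSpan_mem [FiniteDimensional ℝ 𝕫]
    (hJsq : ∀ z v, J z (J z v) = -(‖z‖ ^ 2) • v) (hJnorm : ∀ z v, ‖J z v‖ = ‖z‖ * ‖v‖)
    (hbr : ∀ U V Z, ⟪br U V, Z⟫ = ⟪J Z U, V⟫) (hv : ‖v‖ = 1)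
    (hJW : ∀ z, ∀ w ∈ cliffordSpan J v, J z w ∈ cliffordSpan J v) :
    finrank ℝ (cliffordSpan J v) ∈ ({1, 2, 4, 8} : Set ℕ) := by
  set W := cliffordSpan J v
  have : FiniteDimensional ℝ W := Submodule.finiteDimensional_sup _ _
  have hmem (x : 𝕍) {y : 𝕍} (hy : y ∈ W) : cliffordMul J br v x y ∈ W :=
    add_mem (W.smul_mem _ hy) (hJW _ y hy)
  let mul : W →ₗ[ℝ] W →ₗ[ℝ] W := LinearMap.codRestrict₂ ((cliffordMul J br v).domRestrict₁₂ W W)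
    W.subtype W.injective_subtype fun x y ↦ ⟨⟨_, hmem x y.2⟩, rfl⟩
  have hcoe (x y : W) : (mul x y : 𝕍) = cliffordMul J br v x y :=
    LinearMap.codRestrict₂_apply ((cliffordMul J br v).domRestrict₁₂ W W) W.subtype _ _ x y
  have hform (x : W) : ∃ (s : ℝ) (z : 𝕫), s • v + J z v = x := mem_cliffordSpan.mp x.2
  have hvW : v ∈ W := mem_cliffordSpan.mpr ⟨1, 0, by simp⟩
  refine finrank_mem_of_norm_mul_eq mul ⟨v, hvW⟩ hv (fun y ↦ ?_) (fun x ↦ ?_) (fun x y ↦ ?_)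
  · have h := cliffordMul_smul_add_J hJsq hJnorm hbr hv 1 0 y
    simp only [one_smul, map_zero, add_zero, LinearMap.zero_apply] at h
    exact Subtype.ext ((hcoe _ _).trans h)
  · obtain ⟨s, z, hx⟩ := hform x
    refine Subtype.ext ((hcoe _ _).trans ?_)
    rw [← hx, cliffordMul_smul_add_J hJsq hJnorm hbr hv]
  · obtain ⟨s, z, hx⟩ := hform x
    have hx2 : ‖(x : 𝕍)‖ ^ 2 = s ^ 2 + ‖z‖ ^ 2 := by
      rw [← hx, norm_smul_add_J_sq hJsq hJnorm, hv, one_pow, mul_one]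
    have h2 : ‖(mul x y : 𝕍)‖ ^ 2 = (‖(x : 𝕍)‖ * ‖(y : 𝕍)‖) ^ 2 := by
      rw [hcoe, ← hx, cliffordMul_smul_add_J hJsq hJnorm hbr hv,
        norm_smul_add_J_sq hJsq hJnorm, mul_pow, hx, hx2]
    exact (sq_eq_sq₀ (norm_nonneg _) (by positivity)).mp h2

end CliffordMul

theorem stmt_6_general
    {𝕍 𝕫 : Type*} [NormedAddCommGroup 𝕍] [InnerProductSpace ℝ 𝕍]
    [NormedAddCommGroup 𝕫] [InnerProductSpace ℝ 𝕫] [FiniteDimensional ℝ 𝕫]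
    (J : 𝕫 →ₗ[ℝ] 𝕍 →ₗ[ℝ] 𝕍)
    (hJsq : ∀ (z : 𝕫) (v : 𝕍), J z (J z v) = -(‖z‖ ^ 2) • v)
    (hJnorm : ∀ (z : 𝕫) (v : 𝕍), ‖J z v‖ = ‖z‖ * ‖v‖)
    (br : 𝕍 →ₗ[ℝ] 𝕍 →ₗ[ℝ] 𝕫)
    (hbr : ∀ (U V : 𝕍) (Z : 𝕫), ⟪br U V, Z⟫ = ⟪J Z U, V⟫)
    (v : 𝕍) (hv : v ≠ 0)
    (hJ2 : ∀ z₁ z₂ : 𝕫, ⟪z₁, z₂⟫ = 0 → ∃ z₃ : 𝕫, J z₁ (J z₂ v) = J z₃ v) :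
    Module.finrank ℝ 𝕫 ∈ ({0, 1, 3, 7} : Set ℕ) ∧
    Module.finrank ℝ ((ℝ ∙ v) ⊔ LinearMap.range (J.flip v) : Submodule ℝ 𝕍) =
      Module.finrank ℝ 𝕫 + 1 ∧
    (∀ W : Submodule ℝ 𝕍, W ≤ (ℝ ∙ v) ⊔ LinearMap.range (J.flip v) →
      (∀ z : 𝕫, Submodule.map (J z) W ≤ W) →
      W = ⊥ ∨ W = (ℝ ∙ v) ⊔ LinearMap.range (J.flip v)) := by
  have hdim : finrank ℝ (cliffordSpan J v) = finrank ℝ 𝕫 + 1 :=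
    finrank_cliffordSpan hJsq hJnorm hv
  refine ⟨?_, hdim, fun W hle hW ↦ eq_bot_or_eq_cliffordSpan hJsq hle hW⟩
  have hspan : cliffordSpan J (‖v‖⁻¹ • v) = cliffordSpan J v :=
    cliffordSpan_smul (inv_ne_zero (norm_ne_zero_iff.mpr hv))
  have hunit : ‖‖v‖⁻¹ • v‖ = 1 := by simp [norm_smul, hv]
  have h := finrank_cliffordSpan_mem hJsq hJnorm hbr hunit
    (hspan ▸ fun z _ hw ↦ J_mem_cliffordSpan hJsq hJ2 z hw)
  rw [hspan, hdim] at h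
  simp only [Set.mem_insert_iff, Set.mem_singleton_iff] at h ⊢
  omega

/-- If there is a nonzero `v ∈ 𝔳` satisfying the `J²`-condition, then
`dim 𝔷 ∈ {0,1,3,7}`; moreover, `ℝv + J_𝔷v` has dimension `dim 𝔷 + 1` and is a
nontrivial irreducible Clifford module: its only subspaces invariant under all the
operators `J_z` are `{0}` and itself. -/
theorem stmt_6
    {𝕍 𝕫 : Type*} [NormedAddCommGroup 𝕍] [InnerProductSpace ℝ 𝕍] [FiniteDimensional ℝ 𝕍]
    [NormedAddCommGroup 𝕫] [InnerProductSpace ℝ 𝕫] [FiniteDimensional ℝ 𝕫]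
    (J : 𝕫 →ₗ[ℝ] 𝕍 →ₗ[ℝ] 𝕍)
    (hJsq : ∀ (z : 𝕫) (v : 𝕍), J z (J z v) = -(‖z‖ ^ 2) • v)
    (hJnorm : ∀ (z : 𝕫) (v : 𝕍), ‖J z v‖ = ‖z‖ * ‖v‖)
    (br : 𝕍 →ₗ[ℝ] 𝕍 →ₗ[ℝ] 𝕫)
    (hbr : ∀ (U V : 𝕍) (Z : 𝕫), ⟪br U V, Z⟫ = ⟪J Z U, V⟫)
    (v : 𝕍) (hv : v ≠ 0)
    (hJ2 : ∀ z₁ z₂ : 𝕫, ⟪z₁, z₂⟫ = 0 → ∃ z₃ : 𝕫, J z₁ (J z₂ v) = J z₃ v) :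
    Module.finrank ℝ 𝕫 ∈ ({0, 1, 3, 7} : Set ℕ) ∧
    Module.finrank ℝ ((ℝ ∙ v) ⊔ LinearMap.range (J.flip v) : Submodule ℝ 𝕍) =
      Module.finrank ℝ 𝕫 + 1 ∧
    (∀ W : Submodule ℝ 𝕍, W ≤ (ℝ ∙ v) ⊔ LinearMap.range (J.flip v) →
      (∀ z : 𝕫, Submodule.map (J z) W ≤ W) →
      W = ⊥ ∨ W = (ℝ ∙ v) ⊔ LinearMap.range (J.flip v)) :=
  stmt_6_general J hJsq hJnorm br hbr v hv hJ2
end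

section
/- Let p, q, s, θ be real numbers with p ≥ 0, q ≥ 0, p² + q² + s² = 1, and suppose χ(θ) := (1 − sθ)² + q²θ² ≠ 0. Set X = 2θ(1−sθ)p/χ(θ), Y = 2θ²qp/χ(θ), Z = 2θq/χ(θ), W = (1−θ²)/χ(θ). Then: (i) qX + sY − pZ = 0; (ii) (1 − p²/2)Y − spZ + pqW = pq; (iii) q(X² + Y²) − 2pY = 0; and (iv) if q = 0 then 4p²W + X² − (2p + sX)² = 0. (These identities show that a prolonged geodesic of a Damek–Ricci space with initial velocity (v,z,s), p = ‖v‖, q = ‖z‖, lies on an ellipse when z ≠ 0, and on a parabola with axis parallel to 𝔞 when z = 0 and v ≠ 0.) -/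
/-!
Every coordinate of `γ(θ)` is a polynomial in `p, q, s, θ` divided by `χ(θ)`, so each identity
reduces to a polynomial identity once `χ(θ)` is cleared. Only (ii) needs the normalisation
`p² + q² + s² = 1`: it makes the numerator `pq(χ(θ) - θ²(p² + q² + s²) + θ²)` equal to `pq χ(θ)`.
For (iv), `q = 0` gives `χ(θ) = (1 - sθ)²` and `2p + sX = 2p / (1 - sθ)`, after which the
parabola identity is `θ² + (1 - θ²) = 1`.
-/

namespace DamekRicci

def chi (q s θ : ℝ) : ℝ := (1 - s * θ) ^ 2 + q ^ 2 * θ ^ 2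

noncomputable def coordX (p q s θ : ℝ) : ℝ := 2 * θ * (1 - s * θ) * p / chi q s θ

noncomputable def coordY (p q s θ : ℝ) : ℝ := 2 * θ ^ 2 * q * p / chi q s θ

noncomputable def coordZ (q s θ : ℝ) : ℝ := 2 * θ * q / chi q s θ

noncomputable def coordW (q s θ : ℝ) : ℝ := (1 - θ ^ 2) / chi q s θ

theorem chi_zero_left (s θ : ℝ) : chi 0 s θ = (1 - s * θ) ^ 2 := by
  simp [chi]

theorem one_sub_mul_ne_zero_of_chi_zero_left_ne_zero {s θ : ℝ} (h : chi 0 s θ ≠ 0) :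
    1 - s * θ ≠ 0 := by
  rw [chi_zero_left] at h
  exact pow_ne_zero_iff two_ne_zero |>.mp h

theorem plane_relation (p q s θ : ℝ) :
    q * coordX p q s θ + s * coordY p q s θ - p * coordZ q s θ = 0 := by
  unfold coordX coordY coordZ
  ring

theorem linear_relation {p q s θ : ℝ} (hpqs : p ^ 2 + q ^ 2 + s ^ 2 = 1) (hχ : chi q s θ ≠ 0) :
    (1 - p ^ 2 / 2) * coordY p q s θ - s * p * coordZ q s θ + p * q * coordW q s θ = p * q := by
  unfold coordY coordZ coordW
  rw [← mul_div_assoc, ← mul_div_assoc, ← mul_div_assoc, ← sub_div, ← add_div, div_eq_iff hχ,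
    chi]
  linear_combination (-(p * q * θ ^ 2)) * hpqs

theorem circle_relation {p q s θ : ℝ} (hχ : chi q s θ ≠ 0) :
    q * (coordX p q s θ ^ 2 + coordY p q s θ ^ 2) - 2 * p * coordY p q s θ = 0 := by
  unfold coordX coordY
  field_simp
  rw [chi]
  ring

theorem two_mul_add_mul_coordX_of_chi_zero_left_ne_zero {p s θ : ℝ} (hχ : chi 0 s θ ≠ 0) :
    2 * p + s * coordX p 0 s θ = 2 * p / (1 - s * θ) := by
  have hu := one_sub_mul_ne_zero_of_chi_zero_left_ne_zero hχ
  rw [coordX, chi_zero_left]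
  field_simp
  ring

theorem parabola_relation {p s θ : ℝ} (hχ : chi 0 s θ ≠ 0) :
    4 * p ^ 2 * coordW 0 s θ + coordX p 0 s θ ^ 2 - (2 * p + s * coordX p 0 s θ) ^ 2 = 0 := by
  have hu := one_sub_mul_ne_zero_of_chi_zero_left_ne_zero hχ
  rw [two_mul_add_mul_coordX_of_chi_zero_left_ne_zero hχ, coordW, coordX, chi_zero_left]
  field_simp
  ring

end DamekRicci

open DamekRicci in
theorem stmt_8_general (p q s θ : ℝ)
    (hpqs : p ^ 2 + q ^ 2 + s ^ 2 = 1)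
    (hχ : (1 - s * θ) ^ 2 + q ^ 2 * θ ^ 2 ≠ 0)
    (X Y Z W : ℝ)
    (hX : X = 2 * θ * (1 - s * θ) * p / ((1 - s * θ) ^ 2 + q ^ 2 * θ ^ 2))
    (hY : Y = 2 * θ ^ 2 * q * p / ((1 - s * θ) ^ 2 + q ^ 2 * θ ^ 2))
    (hZ : Z = 2 * θ * q / ((1 - s * θ) ^ 2 + q ^ 2 * θ ^ 2))
    (hW : W = (1 - θ ^ 2) / ((1 - s * θ) ^ 2 + q ^ 2 * θ ^ 2)) :
    q * X + s * Y - p * Z = 0 ∧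
    (1 - p ^ 2 / 2) * Y - s * p * Z + p * q * W = p * q ∧
    q * (X ^ 2 + Y ^ 2) - 2 * p * Y = 0 ∧
    (q = 0 → 4 * p ^ 2 * W + X ^ 2 - (2 * p + s * X) ^ 2 = 0) := by
  subst hX hY hZ hW
  refine ⟨plane_relation p q s θ, linear_relation hpqs hχ, circle_relation hχ, ?_⟩
  rintro rfl
  exact parabola_relation hχ

/-- Coordinate identities for the prolonged geodesic of a Damek–Ricci space:
with `p = ‖v‖`, `q = ‖z‖`, `p² + q² + s² = 1`, `χ(θ) = (1-sθ)² + q²θ² ≠ 0` and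
`X, Y, Z, W` the coordinates of `γ(θ)`, one has
(i) `qX + sY - pZ = 0`; (ii) `(1 - p²/2)Y - spZ + pqW = pq`;
(iii) `q(X² + Y²) - 2pY = 0`; (iv) if `q = 0` then `4p²W + X² - (2p + sX)² = 0`. -/
theorem stmt_8 (p q s θ : ℝ) (hp : 0 ≤ p) (hq : 0 ≤ q)
    (hpqs : p ^ 2 + q ^ 2 + s ^ 2 = 1)
    (hχ : (1 - s * θ) ^ 2 + q ^ 2 * θ ^ 2 ≠ 0)
    (X Y Z W : ℝ)
    (hX : X = 2 * θ * (1 - s * θ) * p / ((1 - s * θ) ^ 2 + q ^ 2 * θ ^ 2))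
    (hY : Y = 2 * θ ^ 2 * q * p / ((1 - s * θ) ^ 2 + q ^ 2 * θ ^ 2))
    (hZ : Z = 2 * θ * q / ((1 - s * θ) ^ 2 + q ^ 2 * θ ^ 2))
    (hW : W = (1 - θ ^ 2) / ((1 - s * θ) ^ 2 + q ^ 2 * θ ^ 2)) :
    q * X + s * Y - p * Z = 0 ∧
    (1 - p ^ 2 / 2) * Y - s * p * Z + p * q * W = p * q ∧
    q * (X ^ 2 + Y ^ 2) - 2 * p * Y = 0 ∧
    (q = 0 → 4 * p ^ 2 * W + X ^ 2 - (2 * p + s * X) ^ 2 = 0) :=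
  stmt_8_general p q s θ hpqs hχ X Y Z W hX hY hZ hW
end

section
/- Let (v, z, s) ∈ 𝔳 × 𝔷 × ℝ with ‖v‖² + ‖z‖² + s² = 1 and s² + ‖z‖² ≠ 0. Then as θ → +∞ (along the filter atTop on ℝ), γ(θ) converges to the point (−(2s/(s²+‖z‖²))·v + (2/(s²+‖z‖²))·J_z(v), 0, −1/(s²+‖z‖²)) in 𝔳 × 𝔷 × ℝ. -/
open RealInnerProductSpace Filter Topology

/-- Substituting `t = θ⁻¹` turns the quotient into `(a + b t + c t²) / (p + q t + r t²)`,
which is continuous at `t = 0`. -/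
theorem tendsto_quadratic_div_quadratic_atTop (a b c p q r : ℝ) (hp : p ≠ 0) :
    Tendsto (fun θ : ℝ => (a * θ ^ 2 + b * θ + c) / (p * θ ^ 2 + q * θ + r)) atTop
      (𝓝 (a / p)) := by
  have hcont : ContinuousAt (fun t : ℝ => (a + b * t + c * t ^ 2) / (p + q * t + r * t ^ 2)) 0 :=
    ContinuousAt.div (by fun_prop) (by fun_prop) (by simpa using hp)
  have hlim := hcont.tendsto.comp tendsto_inv_atTop_zero
  simp only [Function.comp_def] at hlim
  refine (by simpa using hlim : Tendsto _ atTop (𝓝 (a / p))).congr' ?_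
  filter_upwards [eventually_ne_atTop 0] with θ hθ
  have hsq : θ ^ 2 ≠ 0 := pow_ne_zero 2 hθ
  rw [← mul_div_mul_right _ _ hsq]
  congr 1 <;> field_simp

theorem stmt_9_general
    {𝕍 𝕫 : Type*} [NormedAddCommGroup 𝕍] [InnerProductSpace ℝ 𝕍]
    [NormedAddCommGroup 𝕫] [InnerProductSpace ℝ 𝕫]
    (J : 𝕫 →ₗ[ℝ] 𝕍 →ₗ[ℝ] 𝕍)
    (v : 𝕍) (z : 𝕫) (s : ℝ)
    (hsz : s ^ 2 + ‖z‖ ^ 2 ≠ 0) :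
    Tendsto
      (fun θ : ℝ =>
        (((2 * θ * (1 - s * θ) / ((1 - s * θ) ^ 2 + ‖z‖ ^ 2 * θ ^ 2)) • v +
            (2 * θ ^ 2 / ((1 - s * θ) ^ 2 + ‖z‖ ^ 2 * θ ^ 2)) • J z v,
          (2 * θ / ((1 - s * θ) ^ 2 + ‖z‖ ^ 2 * θ ^ 2)) • z,
          (1 - θ ^ 2) / ((1 - s * θ) ^ 2 + ‖z‖ ^ 2 * θ ^ 2)) : 𝕍 × 𝕫 × ℝ))
      atTop
      (𝓝 ((-(2 * s / (s ^ 2 + ‖z‖ ^ 2))) • v + (2 / (s ^ 2 + ‖z‖ ^ 2)) • J z v,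
        (0 : 𝕫), -1 / (s ^ 2 + ‖z‖ ^ 2))) := by
  -- `χ θ = (s² + ‖z‖²) θ² - 2 s θ + 1`, so each coordinate tends to a ratio of
  -- leading coefficients.
  set χ : ℝ → ℝ := fun θ => (1 - s * θ) ^ 2 + ‖z‖ ^ 2 * θ ^ 2
  have coeff (N : ℝ → ℝ) (a b c : ℝ) (hN : ∀ θ, N θ = a * θ ^ 2 + b * θ + c) :
      Tendsto (fun θ => N θ / χ θ) atTop (𝓝 (a / (s ^ 2 + ‖z‖ ^ 2))) :=
    (tendsto_quadratic_div_quadratic_atTop a b c _ (-2 * s) 1 hsz).congr fun θ => by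
      simp only [hN, χ]; ring
  have hv : Tendsto (fun θ => 2 * θ * (1 - s * θ) / χ θ) atTop
      (𝓝 (-(2 * s / (s ^ 2 + ‖z‖ ^ 2)))) := by
    rw [← neg_div, ← neg_mul]; exact coeff _ _ 2 0 fun θ => by ring
  have hJv : Tendsto (fun θ => 2 * θ ^ 2 / χ θ) atTop (𝓝 (2 / (s ^ 2 + ‖z‖ ^ 2))) :=
    coeff _ _ 0 0 fun θ => by ring
  have hz : Tendsto (fun θ => 2 * θ / χ θ) atTop (𝓝 0) := by
    simpa using coeff _ 0 2 0 fun θ => by ring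
  have hs : Tendsto (fun θ => (1 - θ ^ 2) / χ θ) atTop (𝓝 (-1 / (s ^ 2 + ‖z‖ ^ 2))) :=
    coeff _ _ 0 1 fun θ => by ring
  simpa using ((hv.smul_const v).add (hJv.smul_const (J z v))).prodMk_nhds
    ((hz.smul_const z).prodMk_nhds hs)

/-- Let `(v,z,s)` be a unit vector with `s² + ‖z‖² ≠ 0`. Then as `θ → +∞`, the
prolonged geodesic `γ(θ)` converges to the point
`(-(2s/(s²+‖z‖²)) v + (2/(s²+‖z‖²)) J_z v, 0, -1/(s²+‖z‖²))`. -/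
theorem stmt_9
    {𝕍 𝕫 : Type*} [NormedAddCommGroup 𝕍] [InnerProductSpace ℝ 𝕍] [FiniteDimensional ℝ 𝕍]
    [NormedAddCommGroup 𝕫] [InnerProductSpace ℝ 𝕫] [FiniteDimensional ℝ 𝕫]
    (J : 𝕫 →ₗ[ℝ] 𝕍 →ₗ[ℝ] 𝕍)
    (hJsq : ∀ (z : 𝕫) (v : 𝕍), J z (J z v) = -(‖z‖ ^ 2) • v)
    (hJnorm : ∀ (z : 𝕫) (v : 𝕍), ‖J z v‖ = ‖z‖ * ‖v‖)
    (v : 𝕍) (z : 𝕫) (s : ℝ)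
    (hunit : ‖v‖ ^ 2 + ‖z‖ ^ 2 + s ^ 2 = 1)
    (hsz : s ^ 2 + ‖z‖ ^ 2 ≠ 0) :
    Tendsto
      (fun θ : ℝ =>
        (((2 * θ * (1 - s * θ) / ((1 - s * θ) ^ 2 + ‖z‖ ^ 2 * θ ^ 2)) • v +
            (2 * θ ^ 2 / ((1 - s * θ) ^ 2 + ‖z‖ ^ 2 * θ ^ 2)) • J z v,
          (2 * θ / ((1 - s * θ) ^ 2 + ‖z‖ ^ 2 * θ ^ 2)) • z,
          (1 - θ ^ 2) / ((1 - s * θ) ^ 2 + ‖z‖ ^ 2 * θ ^ 2)) : 𝕍 × 𝕫 × ℝ))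
      atTop
      (𝓝 ((-(2 * s / (s ^ 2 + ‖z‖ ^ 2))) • v + (2 / (s ^ 2 + ‖z‖ ^ 2)) • J z v,
        (0 : 𝕫), -1 / (s ^ 2 + ‖z‖ ^ 2))) :=
  stmt_9_general J v z s hsz
end

section
/- Let V₀ ∈ 𝔳 and x₀ = (V₀, 0, −1 − ¼‖V₀‖²), so that the focal variety F_{x₀} passes through e = (0,0,1). Let (v, z, s) ∈ 𝔳 × 𝔷 × ℝ be a unit vector (‖v‖² + ‖z‖² + s² = 1) with v = −½(s·V₀ + J_z(V₀)) (this says exactly that (v,z,s) is orthogonal to the tangent space T_e F_{x₀}). Then s² + ‖z‖² ≠ 0, 1/(s² + ‖z‖²) = 1 + ¼‖V₀‖², and −(2s/(s²+‖z‖²))·v + (2/(s²+‖z‖²))·J_z(v) = V₀; consequently the prolongation of the geodesic γ passes through x₀, i.e. lim_{θ→∞} γ(θ) = x₀. -/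
open RealInnerProductSpace Filter Topology

/-! Since `J_z` squares to `-‖z‖²` and scales norms by `‖z‖`, it is skew, so
`v = -½ (s • V₀ + J_z V₀)` has `‖v‖² = ¼ (s² + ‖z‖²) ‖V₀‖²`, and the unit-length condition then forces
`(s² + ‖z‖²)(1 + ¼‖V₀‖²) = 1`. Each coordinate of `γ(θ)` is a quadratic in `θ` divided by
`χ(θ)`, whose leading coefficient is `s² + ‖z‖² ≠ 0`, so `γ(θ)` converges to the ratio of the
leading coefficients; `J_z² = -‖z‖²` turns these ratios into `x₀`. -/

section

variable {E : Type*} [NormedAddCommGroup E] [InnerProductSpace ℝ E]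

lemma inner_apply_self_eq_zero_of_sq_eq_neg (A : E →ₗ[ℝ] E) (c : ℝ) (x : E)
    (hsq : A (A x) = -(c ^ 2) • x) (hnorm : ∀ y, ‖A y‖ = c * ‖y‖) : ⟪A x, x⟫ = 0 := by
  rcases eq_or_ne c 0 with rfl | hc
  · simp [norm_eq_zero.mp (by simpa using hnorm x)]
  -- compare the two expansions of `‖A (x + A x)‖²`
  have hexp := congrArg (· ^ 2) (hnorm (x + A x))
  simp only [map_add, hsq, mul_pow] at hexp
  rw [norm_add_sq_real, norm_add_sq_real, hnorm, norm_smul, real_inner_smul_right,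
    Real.norm_eq_abs, abs_neg, abs_of_nonneg (sq_nonneg c), real_inner_comm (A x) x] at hexp
  have : c ^ 2 * ⟪A x, x⟫ = 0 := by linear_combination (-1 / 4 : ℝ) * hexp
  exact (mul_eq_zero.mp this).resolve_left (pow_ne_zero 2 hc)

lemma norm_smul_add_apply_sq (A : E →ₗ[ℝ] E) (c s : ℝ) (x : E)
    (hsq : A (A x) = -(c ^ 2) • x) (hnorm : ∀ y, ‖A y‖ = c * ‖y‖) :
    ‖s • x + A x‖ ^ 2 = (s ^ 2 + c ^ 2) * ‖x‖ ^ 2 := by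
  rw [norm_add_sq_real, real_inner_smul_left, real_inner_comm,
    inner_apply_self_eq_zero_of_sq_eq_neg A c x hsq hnorm, norm_smul, hnorm,
    Real.norm_eq_abs, mul_pow, sq_abs]
  ring

lemma smul_sub_apply_smul_add_apply (A : E →ₗ[ℝ] E) (c s : ℝ) (x : E)
    (hsq : A (A x) = -(c ^ 2) • x) :
    s • (s • x + A x) - A (s • x + A x) = (s ^ 2 + c ^ 2) • x := by
  rw [map_add, map_smul, hsq]
  module

end

lemma tendsto_quadratic_div_atTop {p : ℝ → ℝ} (a b c : ℝ)
    (hp : ∀ θ, p θ = a + b * θ + c * θ ^ 2) (s q : ℝ) (h : s ^ 2 + q ≠ 0) :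
    Tendsto (fun θ => p θ / ((1 - s * θ) ^ 2 + q * θ ^ 2)) atTop (𝓝 (c / (s ^ 2 + q))) := by
  -- substitute `t = θ⁻¹`; the resulting rational function is continuous at `t = 0`
  have hcont : ContinuousAt (fun t : ℝ => (a * t ^ 2 + b * t + c) / ((t - s) ^ 2 + q)) 0 :=
    (by fun_prop : Continuous fun t : ℝ => a * t ^ 2 + b * t + c).continuousAt.div
      (by fun_prop) (by simpa using h)
  have hlim := hcont.tendsto.comp tendsto_inv_atTop_zero
  simp only [Function.comp_def] at hlim
  refine (hlim.congr' ?_).trans (by simp)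
  filter_upwards [eventually_ne_atTop 0] with θ hθ
  have hθ2 : (θ⁻¹) ^ 2 ≠ 0 := by positivity
  rw [hp, ← mul_div_mul_right (a + b * θ + c * θ ^ 2) _ hθ2]
  congr 1 <;> field_simp

lemma tendsto_geodesic_atTop {E F : Type*} [NormedAddCommGroup E] [NormedSpace ℝ E]
    [NormedAddCommGroup F] [NormedSpace ℝ F] (v w : E) (z : F) (s : ℝ)
    (h : s ^ 2 + ‖z‖ ^ 2 ≠ 0) :
    Tendsto
      (fun θ : ℝ =>
        (((2 * θ * (1 - s * θ) / ((1 - s * θ) ^ 2 + ‖z‖ ^ 2 * θ ^ 2)) • v +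
            (2 * θ ^ 2 / ((1 - s * θ) ^ 2 + ‖z‖ ^ 2 * θ ^ 2)) • w,
          (2 * θ / ((1 - s * θ) ^ 2 + ‖z‖ ^ 2 * θ ^ 2)) • z,
          (1 - θ ^ 2) / ((1 - s * θ) ^ 2 + ‖z‖ ^ 2 * θ ^ 2)) : E × F × ℝ))
      atTop
      (𝓝 ((-2 * s / (s ^ 2 + ‖z‖ ^ 2)) • v + (2 / (s ^ 2 + ‖z‖ ^ 2)) • w,
        (0 / (s ^ 2 + ‖z‖ ^ 2)) • z, -1 / (s ^ 2 + ‖z‖ ^ 2))) := by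
  have lim (p : ℝ → ℝ) (a b c : ℝ) (hp : ∀ θ, p θ = a + b * θ + c * θ ^ 2) :=
    tendsto_quadratic_div_atTop a b c hp s _ h
  have hV :=
    ((lim (fun θ => 2 * θ * (1 - s * θ)) 0 2 (-2 * s) (fun θ => by ring)).smul_const v).add
      ((lim (fun θ => 2 * θ ^ 2) 0 0 2 (fun θ => by ring)).smul_const w)
  have hZ := (lim (fun θ => 2 * θ) 0 2 0 (fun θ => by ring)).smul_const z
  have ht := lim (fun θ => 1 - θ ^ 2) 1 0 (-1) (fun θ => by ring)
  exact hV.prodMk_nhds (hZ.prodMk_nhds ht)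

theorem stmt_13_general
    {𝕍 𝕫 : Type*} [NormedAddCommGroup 𝕍] [InnerProductSpace ℝ 𝕍]
    [NormedAddCommGroup 𝕫] [InnerProductSpace ℝ 𝕫]
    (J : 𝕫 →ₗ[ℝ] 𝕍 →ₗ[ℝ] 𝕍)
    (hJsq : ∀ (z : 𝕫) (v : 𝕍), J z (J z v) = -(‖z‖ ^ 2) • v)
    (hJnorm : ∀ (z : 𝕫) (v : 𝕍), ‖J z v‖ = ‖z‖ * ‖v‖)
    (V₀ : 𝕍) (v : 𝕍) (z : 𝕫) (s : ℝ)
    (hunit : ‖v‖ ^ 2 + ‖z‖ ^ 2 + s ^ 2 = 1)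
    (hv : v = -(1 / 2 : ℝ) • (s • V₀ + J z V₀)) :
    s ^ 2 + ‖z‖ ^ 2 ≠ 0 ∧
    1 / (s ^ 2 + ‖z‖ ^ 2) = 1 + (1 / 4) * ‖V₀‖ ^ 2 ∧
    (-(2 * s / (s ^ 2 + ‖z‖ ^ 2))) • v + (2 / (s ^ 2 + ‖z‖ ^ 2)) • J z v = V₀ ∧
    Tendsto
      (fun θ : ℝ =>
        (((2 * θ * (1 - s * θ) / ((1 - s * θ) ^ 2 + ‖z‖ ^ 2 * θ ^ 2)) • v +
            (2 * θ ^ 2 / ((1 - s * θ) ^ 2 + ‖z‖ ^ 2 * θ ^ 2)) • J z v,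
          (2 * θ / ((1 - s * θ) ^ 2 + ‖z‖ ^ 2 * θ ^ 2)) • z,
          (1 - θ ^ 2) / ((1 - s * θ) ^ 2 + ‖z‖ ^ 2 * θ ^ 2)) : 𝕍 × 𝕫 × ℝ))
      atTop
      (𝓝 (V₀, (0 : 𝕫), -1 - (1 / 4) * ‖V₀‖ ^ 2)) := by
  have hnorm_v : ‖v‖ ^ 2 = 1 / 4 * (s ^ 2 + ‖z‖ ^ 2) * ‖V₀‖ ^ 2 := by
    rw [hv, norm_smul, mul_pow, norm_smul_add_apply_sq (J z) ‖z‖ s V₀ (hJsq z V₀) (hJnorm z),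
      Real.norm_eq_abs, abs_neg, abs_of_pos one_half_pos]
    ring
  have hprod : (s ^ 2 + ‖z‖ ^ 2) * (1 + 1 / 4 * ‖V₀‖ ^ 2) = 1 := by
    linear_combination hunit - hnorm_v
  have hQ : s ^ 2 + ‖z‖ ^ 2 ≠ 0 := left_ne_zero_of_mul_eq_one hprod
  have hinv : 1 / (s ^ 2 + ‖z‖ ^ 2) = 1 + 1 / 4 * ‖V₀‖ ^ 2 := by
    rw [div_eq_iff hQ]; linear_combination -hprod
  have hV₀ : (-(2 * s / (s ^ 2 + ‖z‖ ^ 2))) • v + (2 / (s ^ 2 + ‖z‖ ^ 2)) • J z v = V₀ := by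
    have key := smul_sub_apply_smul_add_apply (J z) ‖z‖ s V₀ (hJsq z V₀)
    rw [hv, map_smul]
    calc _ = (1 / (s ^ 2 + ‖z‖ ^ 2)) • (s • (s • V₀ + J z V₀) - J z (s • V₀ + J z V₀)) := by
          module
      _ = V₀ := by rw [key, smul_smul, one_div_mul_cancel hQ, one_smul]
  refine ⟨hQ, hinv, hV₀, ?_⟩
  have hx₀ : (V₀, (0 : 𝕫), -1 - (1 / 4) * ‖V₀‖ ^ 2) = ((-2 * s / (s ^ 2 + ‖z‖ ^ 2)) • v +
      (2 / (s ^ 2 + ‖z‖ ^ 2)) • J z v, (0 / (s ^ 2 + ‖z‖ ^ 2)) • z, -1 / (s ^ 2 + ‖z‖ ^ 2)) := by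
    refine Prod.ext ?_ (Prod.ext ?_ ?_)
    · simpa only [neg_mul, neg_div] using hV₀.symm
    · simp
    · rw [neg_div, hinv]; ring
  rw [hx₀]
  exact tendsto_geodesic_atTop v (J z v) z s hQ

/-- Let `x₀ = (V₀, 0, -1 - ¼‖V₀‖²)` (so the focal variety `F_{x₀}` passes through
`e = (0,0,1)`), and let `(v,z,s)` be a unit vector with `v = -½(s V₀ + J_z V₀)`
(orthogonality to `T_e F_{x₀}`). Then `s² + ‖z‖² ≠ 0`,
`1/(s²+‖z‖²) = 1 + ¼‖V₀‖²`, `-(2s/(s²+‖z‖²)) v + (2/(s²+‖z‖²)) J_z v = V₀`, and the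
prolongation of the geodesic `γ` passes through `x₀`: `lim_{θ→∞} γ(θ) = x₀`. -/
theorem stmt_13
    {𝕍 𝕫 : Type*} [NormedAddCommGroup 𝕍] [InnerProductSpace ℝ 𝕍] [FiniteDimensional ℝ 𝕍]
    [NormedAddCommGroup 𝕫] [InnerProductSpace ℝ 𝕫] [FiniteDimensional ℝ 𝕫]
    (J : 𝕫 →ₗ[ℝ] 𝕍 →ₗ[ℝ] 𝕍)
    (hJsq : ∀ (z : 𝕫) (v : 𝕍), J z (J z v) = -(‖z‖ ^ 2) • v)
    (hJnorm : ∀ (z : 𝕫) (v : 𝕍), ‖J z v‖ = ‖z‖ * ‖v‖)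
    (br : 𝕍 →ₗ[ℝ] 𝕍 →ₗ[ℝ] 𝕫)
    (hbr : ∀ (U V : 𝕍) (Z : 𝕫), ⟪br U V, Z⟫ = ⟪J Z U, V⟫)
    (V₀ : 𝕍) (v : 𝕍) (z : 𝕫) (s : ℝ)
    (hunit : ‖v‖ ^ 2 + ‖z‖ ^ 2 + s ^ 2 = 1)
    (hv : v = -(1 / 2 : ℝ) • (s • V₀ + J z V₀)) :
    s ^ 2 + ‖z‖ ^ 2 ≠ 0 ∧
    1 / (s ^ 2 + ‖z‖ ^ 2) = 1 + (1 / 4) * ‖V₀‖ ^ 2 ∧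
    (-(2 * s / (s ^ 2 + ‖z‖ ^ 2))) • v + (2 / (s ^ 2 + ‖z‖ ^ 2)) • J z v = V₀ ∧
    Tendsto
      (fun θ : ℝ =>
        (((2 * θ * (1 - s * θ) / ((1 - s * θ) ^ 2 + ‖z‖ ^ 2 * θ ^ 2)) • v +
            (2 * θ ^ 2 / ((1 - s * θ) ^ 2 + ‖z‖ ^ 2 * θ ^ 2)) • J z v,
          (2 * θ / ((1 - s * θ) ^ 2 + ‖z‖ ^ 2 * θ ^ 2)) • z,
          (1 - θ ^ 2) / ((1 - s * θ) ^ 2 + ‖z‖ ^ 2 * θ ^ 2)) : 𝕍 × 𝕫 × ℝ))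
      atTop
      (𝓝 (V₀, (0 : 𝕫), -1 - (1 / 4) * ‖V₀‖ ^ 2)) :=
  stmt_13_general J hJsq hJnorm V₀ v z s hunit hv
end

section
/- Let V₀ ∈ 𝔳. Then the identity ⟨v, V₀⟩·[v, V₀] + ‖V₀‖²·[v, P_{V₀}(v)] = 0 holds for every v ∈ 𝔳 if and only if V₀ satisfies the J²-condition. -/
open RealInnerProductSpace

/-!
Write `P` for the orthogonal projection onto `J_𝔷V₀` and pick `w` with `P v = J_w V₀`. Since
every `J_Z` is skew-adjoint and `⟨J_Z x, J_w x⟩ = ⟨Z, w⟩ ‖x‖²`, pairing the left-hand side of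
the identity with `Z ∈ 𝔷` gives `-‖V₀‖² ⟨v, J_Z J_w V₀ + ⟨Z, w⟩ V₀⟩`. This vector is orthogonal
to `J_w V₀ = P v`, so the identity holds for all `v` iff all the vectors `J_Z J_w V₀ + ⟨Z, w⟩ V₀`
lie in `J_𝔷V₀` (for the forward direction test `v = u + J_w V₀` with `u ⊥ J_𝔷V₀`). Splitting
`Z` into a multiple of `w` and a part orthogonal to `w`, and using `J_w J_w V₀ = -‖w‖² V₀`,
that is exactly the `J²`-condition.
-/

theorem LinearMap.apply_mem_range_flip {R M N P : Type*} [CommSemiring R] [AddCommMonoid M]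
    [AddCommMonoid N] [AddCommMonoid P] [Module R M] [Module R N] [Module R P]
    (f : M →ₗ[R] N →ₗ[R] P) (m : M) (n : N) : f m n ∈ (f.flip n).range :=
  LinearMap.mem_range_self _ m

/-- The defining properties of `J` for an H-type (Heisenberg-type) Lie algebra `𝔳 ⊕ 𝔷`. -/
structure IsHType {𝕍 𝕫 : Type*} [NormedAddCommGroup 𝕍] [InnerProductSpace ℝ 𝕍]
    [NormedAddCommGroup 𝕫] [InnerProductSpace ℝ 𝕫] (J : 𝕫 →ₗ[ℝ] 𝕍 →ₗ[ℝ] 𝕍) : Prop where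
  apply_apply_self : ∀ (z : 𝕫) (v : 𝕍), J z (J z v) = -(‖z‖ ^ 2) • v
  norm_apply : ∀ (z : 𝕫) (v : 𝕍), ‖J z v‖ = ‖z‖ * ‖v‖

def J2Condition {𝕍 𝕫 : Type*} [AddCommMonoid 𝕍] [Module ℝ 𝕍]
    [NormedAddCommGroup 𝕫] [InnerProductSpace ℝ 𝕫]
    (J : 𝕫 →ₗ[ℝ] 𝕍 →ₗ[ℝ] 𝕍) (V₀ : 𝕍) : Prop :=
  ∀ z₁ z₂ : 𝕫, ⟪z₁, z₂⟫ = 0 → ∃ z₃ : 𝕫, J z₁ (J z₂ V₀) = J z₃ V₀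

namespace IsHType

variable {𝕍 𝕫 : Type*} [NormedAddCommGroup 𝕍] [InnerProductSpace ℝ 𝕍]
  [NormedAddCommGroup 𝕫] [InnerProductSpace ℝ 𝕫] {J : 𝕫 →ₗ[ℝ] 𝕍 →ₗ[ℝ] 𝕍}

theorem inner_apply_apply_same (hJ : IsHType J) (z : 𝕫) (u v : 𝕍) :
    ⟪J z u, J z v⟫ = ‖z‖ ^ 2 * ⟪u, v⟫ := by
  have h := norm_add_sq_real (J z u) (J z v)
  rw [← map_add, hJ.norm_apply, hJ.norm_apply, hJ.norm_apply, mul_pow, mul_pow, mul_pow,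
    norm_add_sq_real] at h
  linarith

theorem inner_apply_left (hJ : IsHType J) (z : 𝕫) (u v : 𝕍) :
    ⟪J z u, v⟫ = -⟪u, J z v⟫ := by
  by_cases hz : z = 0
  · simp [hz]
  have hz2 : ‖z‖ ^ 2 ≠ 0 := by positivity
  have h := hJ.inner_apply_apply_same z u (J z v)
  rw [hJ.apply_apply_self, real_inner_smul_right] at h
  exact (mul_left_cancel₀ (neg_ne_zero.2 hz2) (by linarith)).symm

theorem inner_apply_self_left (hJ : IsHType J) (z : 𝕫) (v : 𝕍) : ⟪J z v, v⟫ = 0 := by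
  have h := hJ.inner_apply_left z v v
  have := real_inner_comm (J z v) v
  linarith

theorem inner_apply_self_right (hJ : IsHType J) (z : 𝕫) (v : 𝕍) : ⟪v, J z v⟫ = 0 := by
  rw [real_inner_comm, hJ.inner_apply_self_left]

theorem inner_apply_apply (hJ : IsHType J) (z₁ z₂ : 𝕫) (v : 𝕍) :
    ⟪J z₁ v, J z₂ v⟫ = ⟪z₁, z₂⟫ * ‖v‖ ^ 2 := by
  have h := hJ.inner_apply_apply_same (z₁ + z₂) v v
  simp only [map_add, LinearMap.add_apply, inner_add_left, inner_add_right,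
    hJ.inner_apply_apply_same, norm_add_sq_real, real_inner_self_eq_norm_sq] at h
  have := real_inner_comm (J z₁ v) (J z₂ v)
  linarith

theorem inner_apply_apply_add_smul (hJ : IsHType J) (V₀ : 𝕍) (z w : 𝕫) :
    ⟪J w V₀, J z (J w V₀) + ⟪z, w⟫ • V₀⟫ = 0 := by
  rw [inner_add_right, hJ.inner_apply_self_right, real_inner_smul_right,
    hJ.inner_apply_self_left, mul_zero, add_zero]

theorem j2Condition_iff_forall_mem_range (hJ : IsHType J) (V₀ : 𝕍) :
    J2Condition J V₀ ↔ ∀ z w : 𝕫, J z (J w V₀) + ⟪z, w⟫ • V₀ ∈ (J.flip V₀).range := by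
  constructor
  · intro hJ2 z w
    rcases eq_or_ne w 0 with rfl | hw
    · simp
    set c := ⟪z, w⟫ / ‖w‖ ^ 2
    have hz : ⟪z, w⟫ = c * ‖w‖ ^ 2 := (div_mul_cancel₀ _ (by positivity)).symm
    have hperp : ⟪z - c • w, w⟫ = 0 := by
      rw [inner_sub_left, real_inner_smul_left, real_inner_self_eq_norm_sq, hz, sub_self]
    obtain ⟨z₃, hz₃⟩ := hJ2 (z - c • w) w hperp
    refine ⟨z₃, ?_⟩
    calc J z₃ V₀ = J (z - c • w) (J w V₀) + c • J w (J w V₀) + ⟪z, w⟫ • V₀ := by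
          rw [← hz₃, hJ.apply_apply_self, hz]; module
      _ = J z (J w V₀) + ⟪z, w⟫ • V₀ := by
          simp only [map_sub, map_smul, LinearMap.sub_apply, LinearMap.smul_apply]
          abel
  · intro hmem z₁ z₂ h
    obtain ⟨z₃, hz₃⟩ := hmem z₁ z₂
    exact ⟨z₃, by simpa [h] using hz₃.symm⟩

theorem inner_smul_bracket_add_smul_bracket (hJ : IsHType J) {br : 𝕍 →ₗ[ℝ] 𝕍 →ₗ[ℝ] 𝕫}
    (hbr : ∀ (U V : 𝕍) (Z : 𝕫), ⟪br U V, Z⟫ = ⟪J Z U, V⟫) {V₀ v : 𝕍} {w : 𝕫}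
    [(J.flip V₀).range.HasOrthogonalProjection]
    (hw : (J.flip V₀).range.starProjection v = J w V₀) (Z : 𝕫) :
    ⟪⟪v, V₀⟫ • br v V₀ + ‖V₀‖ ^ 2 • br v (J w V₀), Z⟫ =
      -‖V₀‖ ^ 2 * ⟪v, J Z (J w V₀) + ⟪Z, w⟫ • V₀⟫ := by
  have hproj : ⟪v, J Z V₀⟫ = ⟪J w V₀, J Z V₀⟫ := by
    rw [← hw, Submodule.inner_starProjection_left_eq_right,
      Submodule.starProjection_eq_self_iff.mpr (J.apply_mem_range_flip Z V₀)]
  rw [inner_add_left, real_inner_smul_left, real_inner_smul_left, hbr, hbr,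
    hJ.inner_apply_left, hproj, hJ.inner_apply_apply, hJ.inner_apply_left, inner_add_right,
    real_inner_smul_right, real_inner_comm w Z]
  ring

theorem mem_range_of_forall_bracket_eq_zero (hJ : IsHType J) {br : 𝕍 →ₗ[ℝ] 𝕍 →ₗ[ℝ] 𝕫}
    (hbr : ∀ (U V : 𝕍) (Z : 𝕫), ⟪br U V, Z⟫ = ⟪J Z U, V⟫) {V₀ : 𝕍} (hV₀ : V₀ ≠ 0)
    [(J.flip V₀).range.HasOrthogonalProjection]
    (hid : ∀ v : 𝕍, ⟪v, V₀⟫ • br v V₀ +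
      ‖V₀‖ ^ 2 • br v ((J.flip V₀).range.starProjection v) = 0) (z w : 𝕫) :
    J z (J w V₀) + ⟪z, w⟫ • V₀ ∈ (J.flip V₀).range := by
  rw [← (J.flip V₀).range.orthogonal_orthogonal, Submodule.mem_orthogonal]
  intro u hu
  have hw : (J.flip V₀).range.starProjection (u + J w V₀) = J w V₀ := by
    rw [map_add, Submodule.starProjection_apply,
      Submodule.orthogonalProjectionOnto_eq_zero_iff.mpr hu, Submodule.coe_zero,
      Submodule.starProjection_eq_self_iff.mpr (J.apply_mem_range_flip w V₀), zero_add]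
  have hzero := hid (u + J w V₀)
  rw [hw] at hzero
  have h := hJ.inner_smul_bracket_add_smul_bracket hbr hw z
  rw [hzero, inner_zero_left, inner_add_left, hJ.inner_apply_apply_add_smul, add_zero] at h
  exact (mul_eq_zero.mp h.symm).resolve_left (neg_ne_zero.mpr (by positivity))

theorem bracket_eq_zero_of_forall_mem_range (hJ : IsHType J) {br : 𝕍 →ₗ[ℝ] 𝕍 →ₗ[ℝ] 𝕫}
    (hbr : ∀ (U V : 𝕍) (Z : 𝕫), ⟪br U V, Z⟫ = ⟪J Z U, V⟫) {V₀ : 𝕍}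
    [(J.flip V₀).range.HasOrthogonalProjection]
    (hT : ∀ z w : 𝕫, J z (J w V₀) + ⟪z, w⟫ • V₀ ∈ (J.flip V₀).range) (v : 𝕍) :
    ⟪v, V₀⟫ • br v V₀ + ‖V₀‖ ^ 2 • br v ((J.flip V₀).range.starProjection v) = 0 := by
  obtain ⟨w, hw⟩ : ∃ w : 𝕫, J w V₀ = (J.flip V₀).range.starProjection v :=
    Submodule.starProjection_apply_mem (J.flip V₀).range v
  refine ext_inner_right ℝ fun Z => ?_
  rw [← hw, hJ.inner_smul_bracket_add_smul_bracket hbr hw.symm Z, inner_zero_left,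
    ← Submodule.starProjection_eq_self_iff.mpr (hT Z w),
    ← Submodule.inner_starProjection_left_eq_right, ← hw, hJ.inner_apply_apply_add_smul,
    mul_zero]

end IsHType

theorem stmt_16_general
    {𝕍 𝕫 : Type*} [NormedAddCommGroup 𝕍] [InnerProductSpace ℝ 𝕍]
    [NormedAddCommGroup 𝕫] [InnerProductSpace ℝ 𝕫] [FiniteDimensional ℝ 𝕫]
    (J : 𝕫 →ₗ[ℝ] 𝕍 →ₗ[ℝ] 𝕍)
    (hJsq : ∀ (z : 𝕫) (v : 𝕍), J z (J z v) = -(‖z‖ ^ 2) • v)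
    (hJnorm : ∀ (z : 𝕫) (v : 𝕍), ‖J z v‖ = ‖z‖ * ‖v‖)
    (br : 𝕍 →ₗ[ℝ] 𝕍 →ₗ[ℝ] 𝕫)
    (hbr : ∀ (U V : 𝕍) (Z : 𝕫), ⟪br U V, Z⟫ = ⟪J Z U, V⟫)
    (V₀ : 𝕍) :
    (∀ v : 𝕍,
        ⟪v, V₀⟫ • br v V₀ +
          ‖V₀‖ ^ 2 •
            br v ((Submodule.orthogonalProjectionOnto (LinearMap.range (J.flip V₀)) v : 𝕍)) = 0) ↔
      (∀ z₁ z₂ : 𝕫, ⟪z₁, z₂⟫ = 0 → ∃ z₃ : 𝕫, J z₁ (J z₂ V₀) = J z₃ V₀) := by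
  have hJ : IsHType J := ⟨hJsq, hJnorm⟩
  change _ ↔ J2Condition J V₀
  simp only [hJ.j2Condition_iff_forall_mem_range, ← Submodule.starProjection_apply]
  refine ⟨fun hid z w => ?_, hJ.bracket_eq_zero_of_forall_mem_range hbr⟩
  rcases eq_or_ne V₀ 0 with rfl | hV₀
  · simp
  exact hJ.mem_range_of_forall_bracket_eq_zero hbr hV₀ hid z w

/-- For `V₀ ∈ 𝔳`, the identity `⟨v,V₀⟩ [v,V₀] + ‖V₀‖² [v, P_{V₀}(v)] = 0` holds for
every `v ∈ 𝔳` if and only if `V₀` satisfies the `J²`-condition; here `P_{V₀}` is the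
orthogonal projection of `𝔳` onto `J_𝔷V₀`. -/
theorem stmt_16
    {𝕍 𝕫 : Type*} [NormedAddCommGroup 𝕍] [InnerProductSpace ℝ 𝕍] [FiniteDimensional ℝ 𝕍]
    [NormedAddCommGroup 𝕫] [InnerProductSpace ℝ 𝕫] [FiniteDimensional ℝ 𝕫]
    (J : 𝕫 →ₗ[ℝ] 𝕍 →ₗ[ℝ] 𝕍)
    (hJsq : ∀ (z : 𝕫) (v : 𝕍), J z (J z v) = -(‖z‖ ^ 2) • v)
    (hJnorm : ∀ (z : 𝕫) (v : 𝕍), ‖J z v‖ = ‖z‖ * ‖v‖)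
    (br : 𝕍 →ₗ[ℝ] 𝕍 →ₗ[ℝ] 𝕫)
    (hbr : ∀ (U V : 𝕍) (Z : 𝕫), ⟪br U V, Z⟫ = ⟪J Z U, V⟫)
    (V₀ : 𝕍) :
    (∀ v : 𝕍,
        ⟪v, V₀⟫ • br v V₀ +
          ‖V₀‖ ^ 2 •
            br v ((Submodule.orthogonalProjectionOnto (LinearMap.range (J.flip V₀)) v : 𝕍)) = 0) ↔
      (∀ z₁ z₂ : 𝕫, ⟪z₁, z₂⟫ = 0 → ∃ z₃ : 𝕫, J z₁ (J z₂ V₀) = J z₃ V₀) :=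
  stmt_16_general J hJsq hJnorm br hbr V₀
end
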